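/- arXiv:1105.2806 — 10 statements merged into one kernel-verified Lean document; each statement's English description precedes it below -/
import Mathlib

section
/- Let S be a topological Clifford semigroup with set of idempotents E. Then the diagonal number of S satisfies Δ(S) ≤ Δ(E) · ψ(E,S), where Δ(X) is the smallest infinite cardinality of a family of open subsets of X×X whose intersection is the diagonal, and ψ(E,S) is the smallest infinite cardinality of a family of open subsets of S whose intersection equals E. -/
open Cardinal

/-- The pseudocharacter `ψ(A, X)`: the smallest infinite cardinal `κ` for which there
is a family of open subsets of `X` of cardinality `≤ κ` whose intersection is `A`. -/
noncomputable def pseudoChar {X : Type*} [TopologicalSpace X] (A : Set X) : Cardinal :=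
  sInf {c : Cardinal | Cardinal.aleph0 ≤ c ∧
    ∃ 𝒰 : Set (Set X), (∀ U ∈ 𝒰, IsOpen U) ∧ ⋂₀ 𝒰 = A ∧ Cardinal.mk 𝒰 ≤ c}

/-- The diagonal number `Δ(X) = ψ(Δ_X, X × X)`. -/
noncomputable def diagNumber (X : Type*) [TopologicalSpace X] : Cardinal :=
  pseudoChar {p : X × X | p.1 = p.2}

/-!
Write `π x = x x⁻¹` for the idempotent of the maximal subgroup containing `x`. Two points
`x, y` coincide iff `π x = π y` and `x y⁻¹` is idempotent: then `x y⁻¹` is an idempotent of the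
group with identity `π x`, so it equals `π x`, and `x = (x y⁻¹) y = π y · y = y`. Hence the
diagonal of `S × S` is the intersection of the preimage of `Δ_E` under `π × π` and the preimage
of `E` under `(x, y) ↦ x y⁻¹`. Both maps are continuous, and pseudocharacter does not grow under
continuous preimages, while that of an intersection is at most the product of the two.
-/

section Pseudocharacter

universe u

variable {X Y : Type u} [TopologicalSpace X] [TopologicalSpace Y]

theorem pseudoChar_le_of_sInter_eq {A : Set X} {c : Cardinal} (hc : ℵ₀ ≤ c)
    {𝒰 : Set (Set X)} (hopen : ∀ U ∈ 𝒰, IsOpen U) (hA : ⋂₀ 𝒰 = A) (hcard : #𝒰 ≤ c) :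
    pseudoChar A ≤ c :=
  csInf_le' ⟨hc, 𝒰, hopen, hA, hcard⟩

theorem pseudoChar_ne_zero_of_sInter_eq {A : Set X} {𝒰 : Set (Set X)}
    (hopen : ∀ U ∈ 𝒰, IsOpen U) (hA : ⋂₀ 𝒰 = A) : pseudoChar A ≠ 0 := by
  refine (aleph0_pos.trans_le (le_csInf ?_ fun c hc => hc.1)).ne'
  exact ⟨max ℵ₀ #𝒰, le_max_left _ _, 𝒰, hopen, hA, le_max_right _ _⟩

/-- Outside the junk value `0` (when `A` is no intersection of open sets), the infimum
defining `pseudoChar A` is attained. -/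
theorem pseudoChar_spec {A : Set X} (h : pseudoChar A ≠ 0) :
    ℵ₀ ≤ pseudoChar A ∧
      ∃ 𝒰 : Set (Set X), (∀ U ∈ 𝒰, IsOpen U) ∧ ⋂₀ 𝒰 = A ∧ #𝒰 ≤ pseudoChar A := by
  refine csInf_mem (s := {c | ℵ₀ ≤ c ∧
    ∃ 𝒰 : Set (Set X), (∀ U ∈ 𝒰, IsOpen U) ∧ ⋂₀ 𝒰 = A ∧ #𝒰 ≤ c})
    (Set.nonempty_iff_ne_empty.2 fun hempty => h ?_)
  rw [pseudoChar, hempty, Cardinal.sInf_empty]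

theorem pseudoChar_preimage_ne_zero {f : X → Y} (hf : Continuous f) {A : Set Y}
    (hA : pseudoChar A ≠ 0) : pseudoChar (f ⁻¹' A) ≠ 0 := by
  obtain ⟨-, 𝒰, hopen, rfl, -⟩ := pseudoChar_spec hA
  refine pseudoChar_ne_zero_of_sInter_eq (𝒰 := Set.preimage f '' 𝒰) ?_ ?_
  · exact Set.forall_mem_image.2 fun U hU => (hopen U hU).preimage hf
  · rw [Set.sInter_image, Set.preimage_sInter]

theorem pseudoChar_preimage_le {f : X → Y} (hf : Continuous f) {A : Set Y}
    (hA : pseudoChar A ≠ 0) : pseudoChar (f ⁻¹' A) ≤ pseudoChar A := by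
  obtain ⟨hc, 𝒰, hopen, rfl, hcard⟩ := pseudoChar_spec hA
  refine pseudoChar_le_of_sInter_eq hc (𝒰 := Set.preimage f '' 𝒰) ?_ ?_
    (mk_image_le.trans hcard)
  · exact Set.forall_mem_image.2 fun U hU => (hopen U hU).preimage hf
  · rw [Set.sInter_image, Set.preimage_sInter]

theorem pseudoChar_inter_le_mul {A B : Set X} (hA : pseudoChar A ≠ 0)
    (hB : pseudoChar B ≠ 0) : pseudoChar (A ∩ B) ≤ pseudoChar A * pseudoChar B := by
  obtain ⟨hκ, 𝒰, hU, rfl, hUcard⟩ := pseudoChar_spec hA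
  obtain ⟨hμ, 𝒱, hV, rfl, hVcard⟩ := pseudoChar_spec hB
  have hmul : pseudoChar (⋂₀ 𝒰) * pseudoChar (⋂₀ 𝒱) =
      max (pseudoChar (⋂₀ 𝒰)) (pseudoChar (⋂₀ 𝒱)) := mul_eq_max hκ hμ
  refine pseudoChar_le_of_sInter_eq (hmul ▸ hκ.trans (le_max_left _ _)) (𝒰 := 𝒰 ∪ 𝒱)
    (fun U hUV => hUV.elim (hU U) (hV U)) (Set.sInter_union 𝒰 𝒱) ?_
  calc #↥(𝒰 ∪ 𝒱) ≤ #𝒰 + #𝒱 := mk_union_le 𝒰 𝒱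
    _ ≤ pseudoChar (⋂₀ 𝒰) + pseudoChar (⋂₀ 𝒱) := add_le_add hUcard hVcard
    _ = pseudoChar (⋂₀ 𝒰) * pseudoChar (⋂₀ 𝒱) := by rw [hmul, add_eq_max hκ]

end Pseudocharacter

/-- `inv` makes the semigroup `S` a Clifford semigroup: `inv x` is the inverse of `x`
in the maximal subgroup containing `x`. -/
structure IsCliffordInv {S : Type*} [Semigroup S] (inv : S → S) : Prop where
  mul_inv_mul : ∀ x, x * inv x * x = x
  inv_mul_inv : ∀ x, inv x * x * inv x = inv x
  mul_inv_comm : ∀ x, x * inv x = inv x * x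

namespace IsCliffordInv

variable {S : Type*} [Semigroup S] {inv : S → S}

theorem isIdempotentElem_mul_inv (h : IsCliffordInv inv) (x : S) :
    IsIdempotentElem (x * inv x) := by
  rw [IsIdempotentElem, mul_assoc, ← mul_assoc (inv x), h.inv_mul_inv]

theorem mul_mul_inv_self (h : IsCliffordInv inv) (x : S) : x * (x * inv x) = x := by
  rw [h.mul_inv_comm, ← mul_assoc, h.mul_inv_mul]

theorem eq_of_mul_inv_eq (h : IsCliffordInv inv) {x y : S} (hxy : x * inv x = y * inv y)
    (hidem : IsIdempotentElem (x * inv y)) : x = y := by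
  have hx : x * (inv y * y) = x := by rw [← h.mul_inv_comm, ← hxy, h.mul_mul_inv_self]
  have hright : x * inv y * (y * inv x) = x * inv x := by
    rw [mul_assoc x, ← mul_assoc (inv y), ← mul_assoc x, hx]
  have hleft : x * inv y * (x * inv x) = x * inv y := by
    rw [hxy, mul_assoc x, ← mul_assoc (inv y), h.inv_mul_inv]
  have hunit : x * inv y = x * inv x :=
    calc x * inv y = x * inv y * (x * inv y * (y * inv x)) := by rw [hright, hleft]
      _ = x * inv y * (y * inv x) := by rw [← mul_assoc, hidem.eq]
      _ = x * inv x := hright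
  calc x = x * inv y * y := by rw [mul_assoc, hx]
    _ = y := by rw [hunit, hxy, h.mul_inv_mul]

theorem eq_iff (h : IsCliffordInv inv) {x y : S} :
    x = y ↔ x * inv x = y * inv y ∧ IsIdempotentElem (x * inv y) := by
  refine ⟨?_, fun ⟨hxy, hidem⟩ => h.eq_of_mul_inv_eq hxy hidem⟩
  rintro rfl
  exact ⟨rfl, h.isIdempotentElem_mul_inv x⟩

end IsCliffordInv

/-- For a topological Clifford semigroup `S` with idempotent set `E`:
`Δ(S) ≤ Δ(E) * ψ(E, S)`. -/
theorem diagNumber_le_of_clifford {S : Type*} [TopologicalSpace S] [Semigroup S]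
    [ContinuousMul S] (inv : S → S) (hinv : Continuous inv)
    (h1 : ∀ x : S, x * inv x * x = x)
    (h2 : ∀ x : S, inv x * x * inv x = inv x)
    (h3 : ∀ x : S, x * inv x = inv x * x) :
    diagNumber S ≤ diagNumber ↥{e : S | e * e = e} * pseudoChar {e : S | e * e = e} := by
  have hS : IsCliffordInv inv := ⟨h1, h2, h3⟩
  set E : Set S := {e : S | e * e = e}
  rcases eq_or_ne (diagNumber S) 0 with h0 | hΔS
  · exact h0 ▸ zero_le
  have hψE : pseudoChar E ≠ 0 :=
    pseudoChar_preimage_ne_zero (f := fun x => (x * x, x)) (by fun_prop) hΔS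
  have hΔE : diagNumber E ≠ 0 := by
    have := pseudoChar_preimage_ne_zero (A := Set.diagonal S)
      (f := Prod.map ((↑) : E → S) ((↑) : E → S)) (by fun_prop) hΔS
    rwa [Set.preimage_coe_coe_diagonal] at this
  let π : S × S → E × E := fun p =>
    (⟨p.1 * inv p.1, hS.isIdempotentElem_mul_inv p.1⟩,
      ⟨p.2 * inv p.2, hS.isIdempotentElem_mul_inv p.2⟩)
  have hπ : Continuous π := by fun_prop
  have hquot : Continuous fun p : S × S => p.1 * inv p.2 := by fun_prop
  have hdiag : {p : S × S | p.1 = p.2} =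
      π ⁻¹' {q | q.1 = q.2} ∩ (fun p : S × S => p.1 * inv p.2) ⁻¹' E := by
    ext ⟨x, y⟩
    simpa [π, E, Subtype.ext_iff, IsIdempotentElem] using hS.eq_iff
  calc diagNumber S
      ≤ diagNumber E * pseudoChar ((fun p : S × S => p.1 * inv p.2) ⁻¹' E) := by
        rw [diagNumber, hdiag]
        exact (pseudoChar_inter_le_mul (pseudoChar_preimage_ne_zero hπ hΔE)
          (pseudoChar_preimage_ne_zero hquot hψE)).trans
          (mul_le_mul_left (pseudoChar_preimage_le hπ hΔE) _)
    _ ≤ diagNumber E * pseudoChar E := mul_le_mul_right (pseudoChar_preimage_le hquot hψE) _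
end

section
/- If S is a topological Clifford semigroup whose set of idempotents E has a G_δ-diagonal (i.e., the diagonal of E×E is an intersection of countably many open sets) and E is a G_δ-set in S, then S has a G_δ-diagonal. -/
lemma isGδ_preimage {X Y : Type*} [TopologicalSpace X] [TopologicalSpace Y]
    {s : Set Y} (hs : IsGδ s) {f : X → Y} (hf : Continuous f) : IsGδ (f ⁻¹' s) := by
  obtain ⟨T, hTo, hTc, rfl⟩ := hs
  rw [Set.preimage_sInter]
  exact IsGδ.biInter hTc fun t ht => ((hTo t ht).preimage hf).isGδ

lemma clifford_aux {S : Type*} [Semigroup S] (inv : S → S)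
    (h1 : ∀ x : S, x * inv x * x = x)
    (h2 : ∀ x : S, inv x * x * inv x = inv x)
    (h3 : ∀ x : S, x * inv x = inv x * x)
    {x y : S} (hφ : x * inv x = y * inv y)
    (hf : (x * inv y) * (x * inv y) = x * inv y) : x = y := by
  have hyy : inv y * y = y * inv y := (h3 y).symm
  have hxx : inv x * x = x * inv x := (h3 x).symm
  have gf : (y * inv x) * (x * inv y) = x * inv x := by
    calc (y * inv x) * (x * inv y) = y * ((inv x * x) * inv y) := by
          rw [mul_assoc, ← mul_assoc (inv x)]
      _ = y * ((x * inv x) * inv y) := by rw [hxx]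
      _ = y * ((y * inv y) * inv y) := by rw [hφ]
      _ = y * ((inv y * y) * inv y) := by rw [hyy]
      _ = y * inv y := by rw [h2]
      _ = x * inv x := hφ.symm
  have ef : (x * inv x) * (x * inv y) = x * inv y := by
    rw [← mul_assoc, h1]
  have hfe : x * inv y = x * inv x := by
    calc x * inv y = (x * inv x) * (x * inv y) := ef.symm
      _ = ((y * inv x) * (x * inv y)) * (x * inv y) := by rw [gf]
      _ = (y * inv x) * ((x * inv y) * (x * inv y)) := by rw [mul_assoc]
      _ = (y * inv x) * (x * inv y) := by rw [hf]
      _ = x * inv x := gf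
  have fy : (x * inv y) * y = x := by
    calc (x * inv y) * y = x * (inv y * y) := mul_assoc _ _ _
      _ = x * (y * inv y) := by rw [hyy]
      _ = x * (x * inv x) := by rw [hφ]
      _ = x * (inv x * x) := by rw [← hxx]
      _ = x := by rw [← mul_assoc, h1]
  have ey : (x * inv x) * y = y := by rw [hφ]; exact h1 y
  calc x = (x * inv y) * y := fy.symm
    _ = (x * inv x) * y := by rw [hfe]
    _ = y := ey

/-- If a topological Clifford semigroup `S` has idempotent set `E` with a `G_δ`-diagonal
and `E` is a `G_δ`-set in `S`, then `S` has a `G_δ`-diagonal. -/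
theorem clifford_gdelta_diagonal {S : Type*} [TopologicalSpace S] [Semigroup S]
    [ContinuousMul S] (inv : S → S) (hinv : Continuous inv)
    (h1 : ∀ x : S, x * inv x * x = x)
    (h2 : ∀ x : S, inv x * x * inv x = inv x)
    (h3 : ∀ x : S, x * inv x = inv x * x)
    (hEdiag : IsGδ {p : {e : S // e * e = e} × {e : S // e * e = e} | p.1 = p.2})
    (hE : IsGδ {e : S | e * e = e}) :
    IsGδ {p : S × S | p.1 = p.2} := by
  have hidem : ∀ x : S, (x * inv x) * (x * inv x) = x * inv x := fun x => by
    rw [mul_assoc, ← mul_assoc (inv x), h2]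
  have hφc : Continuous fun x : S => (⟨x * inv x, hidem x⟩ : {e : S // e * e = e}) :=
    Continuous.subtype_mk (continuous_id.mul hinv) _
  have hA : IsGδ ((fun p : S × S =>
      ((⟨p.1 * inv p.1, hidem p.1⟩ : {e : S // e * e = e}),
       (⟨p.2 * inv p.2, hidem p.2⟩ : {e : S // e * e = e})))
      ⁻¹' {p : {e : S // e * e = e} × {e : S // e * e = e} | p.1 = p.2}) :=
    isGδ_preimage hEdiag ((hφc.comp continuous_fst).prodMk (hφc.comp continuous_snd))
  have hB : IsGδ ((fun p : S × S => p.1 * inv p.2) ⁻¹' {e : S | e * e = e}) :=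
    isGδ_preimage hE (continuous_fst.mul (hinv.comp continuous_snd))
  have hEq : {p : S × S | p.1 = p.2} =
      ((fun p : S × S =>
      ((⟨p.1 * inv p.1, hidem p.1⟩ : {e : S // e * e = e}),
       (⟨p.2 * inv p.2, hidem p.2⟩ : {e : S // e * e = e})))
      ⁻¹' {p : {e : S // e * e = e} × {e : S // e * e = e} | p.1 = p.2}) ∩
      ((fun p : S × S => p.1 * inv p.2) ⁻¹' {e : S | e * e = e}) := by
    ext ⟨x, y⟩
    simp only [Set.mem_setOf_eq, Set.mem_inter_iff, Set.mem_preimage, Subtype.mk.injEq]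
    constructor
    · rintro rfl
      exact ⟨rfl, hidem x⟩
    · rintro ⟨ha, hb⟩
      exact clifford_aux inv h1 h2 h3 ha hb
  rw [hEq]
  exact hA.inter hB
end

section
/- There exists a non-metrizable countable commutative topological Clifford semigroup S whose set of idempotents E is compact, metrizable, and open in S. -/
open Set Filter Topology TopologicalSpace

namespace CliffordEx

abbrev XX : Type := Option (ℕ × ℕ)
abbrev SS : Type := XX × ZMod 2

def meet (x y : XX) : XX := if x = y then x else none

lemma meet_self (x : XX) : meet x x = x := if_pos rfl

lemma meet_comm (x y : XX) : meet x y = meet y x := by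
  unfold meet; split_ifs <;> simp_all

lemma meet_assoc (x y z : XX) : meet (meet x y) z = meet x (meet y z) := by
  unfold meet; split_ifs <;> simp_all

instance : CommSemigroup SS where
  mul a b := (meet a.1 b.1, a.2 + b.2)
  mul_assoc a b c := Prod.ext (meet_assoc _ _ _) (add_assoc _ _ _)
  mul_comm a b := Prod.ext (meet_comm _ _) (add_comm _ _)

lemma mul_def (a b : SS) : a * b = (meet a.1 b.1, a.2 + b.2) := rfl

lemma zmod2_cases (i : ZMod 2) : i = 0 ∨ i = 1 := by revert i; decide

/-- the topology -/
def IsOpenS (U : Set SS) : Prop :=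
  (((none : XX), (0 : ZMod 2)) ∈ U → {p : ℕ × ℕ | ((some p : XX), (0 : ZMod 2)) ∉ U}.Finite) ∧
  (((none : XX), (1 : ZMod 2)) ∈ U → ∀ m : ℕ,
    {n : ℕ | ((some (m, n) : XX), (1 : ZMod 2)) ∉ U}.Finite)

instance : TopologicalSpace SS where
  IsOpen := IsOpenS
  isOpen_univ := by constructor <;> intro h <;> simp
  isOpen_inter U V hU hV := by
    constructor
    · intro h
      refine ((hU.1 h.1).union (hV.1 h.2)).subset ?_
      intro p hp
      simp only [Set.mem_setOf_eq, Set.mem_inter_iff, Set.mem_union] at *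
      tauto
    · intro h m
      refine ((hU.2 h.1 m).union (hV.2 h.2 m)).subset ?_
      intro n hn
      simp only [Set.mem_setOf_eq, Set.mem_inter_iff, Set.mem_union] at *
      tauto
  isOpen_sUnion 𝒮 h := by
    constructor
    · rintro ⟨U, hU, hmem⟩
      refine ((h U hU).1 hmem).subset ?_
      intro p hp
      simp only [Set.mem_setOf_eq] at *
      exact fun hx => hp ⟨U, hU, hx⟩
    · rintro ⟨U, hU, hmem⟩ m
      refine ((h U hU).2 hmem m).subset ?_
      intro n hn
      simp only [Set.mem_setOf_eq] at *
      exact fun hx => hn ⟨U, hU, hx⟩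

lemma isOpen_iffS {U : Set SS} : IsOpen U ↔ IsOpenS U := Iff.rfl

/-- basic neighborhoods of `(none, 0)` -/
def N0 (F : Finset (ℕ × ℕ)) : Set SS :=
  {s | s = ((none : XX), (0 : ZMod 2)) ∨ ∃ p ∉ F, s = ((some p : XX), (0 : ZMod 2))}

/-- basic neighborhoods of `(none, 1)` -/
def N1 (g : ℕ → Finset ℕ) : Set SS :=
  {s | s = ((none : XX), (1 : ZMod 2)) ∨
    ∃ p : ℕ × ℕ, p.2 ∉ g p.1 ∧ s = ((some p : XX), (1 : ZMod 2))}

lemma mem_N0_none (F : Finset (ℕ × ℕ)) : ((none : XX), (0 : ZMod 2)) ∈ N0 F := Or.inl rfl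

lemma mem_N1_none (g : ℕ → Finset ℕ) : ((none : XX), (1 : ZMod 2)) ∈ N1 g := Or.inl rfl

lemma mem_N0_some {F : Finset (ℕ × ℕ)} {p : ℕ × ℕ} (hp : p ∉ F) :
    ((some p : XX), (0 : ZMod 2)) ∈ N0 F := Or.inr ⟨p, hp, rfl⟩

lemma mem_N1_some {g : ℕ → Finset ℕ} {p : ℕ × ℕ} (hp : p.2 ∉ g p.1) :
    ((some p : XX), (1 : ZMod 2)) ∈ N1 g := Or.inr ⟨p, hp, rfl⟩

lemma ne01 : ((none : XX), (1 : ZMod 2)) ≠ ((none : XX), (0 : ZMod 2)) := by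
  decide

lemma isOpen_N0 (F : Finset (ℕ × ℕ)) : IsOpen (N0 F) := by
  rw [isOpen_iffS]
  constructor
  · intro _
    refine F.finite_toSet.subset ?_
    intro p hp
    simp only [Set.mem_setOf_eq] at hp
    by_contra hpF
    exact hp (mem_N0_some hpF)
  · intro h
    exact absurd h (by
      intro h
      rcases h with h | ⟨p, _, h⟩
      · exact ne01 h
      · simp [Prod.ext_iff] at h)

lemma isClosed_N0 (F : Finset (ℕ × ℕ)) : IsClosed (N0 F) := by
  rw [← isOpen_compl_iff, isOpen_iffS]
  constructor
  · intro h
    exact absurd (mem_N0_none F) h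
  · intro _ m
    convert Set.finite_empty
    ext n
    simp only [Set.mem_setOf_eq, Set.mem_empty_iff_false, iff_false, not_not]
    intro h
    rcases h with h | ⟨p, _, h⟩
    · simp [Prod.ext_iff] at h
    · simp [Prod.ext_iff] at h

lemma isOpen_N1 (g : ℕ → Finset ℕ) : IsOpen (N1 g) := by
  rw [isOpen_iffS]
  constructor
  · intro h
    exact absurd h (by
      intro h
      rcases h with h | ⟨p, _, h⟩
      · exact ne01 h.symm
      · simp [Prod.ext_iff] at h)
  · intro _ m
    refine (g m).finite_toSet.subset ?_
    intro n hn
    simp only [Set.mem_setOf_eq] at hn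
    by_contra hng
    exact hn (mem_N1_some (p := (m, n)) hng)

lemma isClosed_N1 (g : ℕ → Finset ℕ) : IsClosed (N1 g) := by
  rw [← isOpen_compl_iff, isOpen_iffS]
  constructor
  · intro _
    convert Set.finite_empty
    ext p
    simp only [Set.mem_setOf_eq, Set.mem_empty_iff_false, iff_false, not_not]
    intro h
    rcases h with h | ⟨q, _, h⟩
    · simp [Prod.ext_iff] at h
    · simp [Prod.ext_iff] at h
  · intro h
    exact absurd (mem_N1_none g) h

lemma isOpen_singleton_some (p : ℕ × ℕ) (i : ZMod 2) :
    IsOpen ({((some p : XX), i)} : Set SS) := by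
  rw [isOpen_iffS]
  constructor
  · intro h; simp [Prod.ext_iff] at h
  · intro h; simp [Prod.ext_iff] at h

lemma nhds_some (p : ℕ × ℕ) (i : ZMod 2) :
    𝓝 (((some p : XX), i) : SS) = pure ((some p : XX), i) :=
  (isOpen_singleton_iff_nhds_eq_pure _).1 (isOpen_singleton_some p i)

lemma exists_N0_subset_of_isOpen {V : Set SS} (hV : IsOpen V)
    (hmem : ((none : XX), (0 : ZMod 2)) ∈ V) : ∃ F, N0 F ⊆ V := by
  have hfin := (isOpen_iffS.1 hV).1 hmem
  refine ⟨hfin.toFinset, ?_⟩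
  rintro s (rfl | ⟨p, hp, rfl⟩)
  · exact hmem
  · rw [Set.Finite.mem_toFinset] at hp
    simpa using not_not.1 hp

lemma exists_N1_subset_of_isOpen {V : Set SS} (hV : IsOpen V)
    (hmem : ((none : XX), (1 : ZMod 2)) ∈ V) : ∃ g, N1 g ⊆ V := by
  have hfin := (isOpen_iffS.1 hV).2 hmem
  refine ⟨fun m => (hfin m).toFinset, ?_⟩
  rintro s (rfl | ⟨p, hp, rfl⟩)
  · exact hmem
  · rw [Set.Finite.mem_toFinset] at hp
    have := not_not.1 hp
    simpa using this

lemma exists_N0_subset {U : Set SS} (h : U ∈ 𝓝 ((none : XX), (0 : ZMod 2))) :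
    ∃ F, N0 F ⊆ U := by
  rcases mem_nhds_iff.1 h with ⟨V, hVU, hV, hmem⟩
  rcases exists_N0_subset_of_isOpen hV hmem with ⟨F, hF⟩
  exact ⟨F, hF.trans hVU⟩

lemma exists_N1_subset {U : Set SS} (h : U ∈ 𝓝 ((none : XX), (1 : ZMod 2))) :
    ∃ g, N1 g ⊆ U := by
  rcases mem_nhds_iff.1 h with ⟨V, hVU, hV, hmem⟩
  rcases exists_N1_subset_of_isOpen hV hmem with ⟨g, hg⟩
  exact ⟨g, hg.trans hVU⟩

lemma N0_mem_nhds (F : Finset (ℕ × ℕ)) : N0 F ∈ 𝓝 ((none : XX), (0 : ZMod 2)) :=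
  (isOpen_N0 F).mem_nhds (mem_N0_none F)

lemma N1_mem_nhds (g : ℕ → Finset ℕ) : N1 g ∈ 𝓝 ((none : XX), (1 : ZMod 2)) :=
  (isOpen_N1 g).mem_nhds (mem_N1_none g)

lemma hasBasis_nhds0 : (𝓝 (((none : XX), (0 : ZMod 2)) : SS)).HasBasis
    (fun _ : Finset (ℕ × ℕ) => True) N0 := by
  constructor
  intro U
  constructor
  · intro h
    rcases exists_N0_subset h with ⟨F, hF⟩
    exact ⟨F, trivial, hF⟩
  · rintro ⟨F, _, hF⟩
    exact mem_of_superset (N0_mem_nhds F) hF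


lemma tendsto_mul_of {a b : SS}
    (h : ∀ U ∈ 𝓝 (a * b), ∃ V ∈ 𝓝 a, ∃ W ∈ 𝓝 b, ∀ v ∈ V, ∀ w ∈ W, v * w ∈ U) :
    ContinuousAt (fun p : SS × SS => p.1 * p.2) (a, b) := by
  rw [ContinuousAt, nhds_prod_eq]
  intro U hU
  rcases h U hU with ⟨V, hV, W, hW, hVW⟩
  rw [mem_map]
  refine mem_of_superset (prod_mem_prod hV hW) ?_
  rintro ⟨v, w⟩ ⟨hv, hw⟩
  exact hVW v hv w hw

lemma mul_none_left (x : XX) (i j : ZMod 2) :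
    ((none : XX), i) * (x, j) = ((none : XX), i + j) := by
  rcases x with _ | p
  · rfl
  · simp [mul_def, meet]

lemma mul_none_right (x : XX) (i j : ZMod 2) :
    (x, i) * ((none : XX), j) = ((none : XX), i + j) := by
  rcases x with _ | p
  · rfl
  · simp [mul_def, meet]

lemma mul_some_some {p q : ℕ × ℕ} (hpq : p ≠ q) (i j : ZMod 2) :
    ((some p : XX), i) * ((some q : XX), j) = ((none : XX), i + j) := by
  simp [mul_def, meet, hpq]

lemma mul_some_self (p : ℕ × ℕ) (i j : ZMod 2) :
    ((some p : XX), i) * ((some p : XX), j) = ((some p : XX), i + j) := by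
  simp [mul_def, meet]

/-- Key step : multiply a basic neighborhood of `(none, i)` by a fixed isolated point. -/
lemma contAt_none_some (i j : ZMod 2) (q : ℕ × ℕ) :
    ContinuousAt (fun p : SS × SS => p.1 * p.2) (((none : XX), i), ((some q : XX), j)) := by
  refine tendsto_mul_of ?_
  intro U hU
  rw [mul_none_left] at hU
  have hUmem : ((none : XX), i + j) ∈ U := mem_of_mem_nhds hU
  rcases zmod2_cases i with rfl | rfl
  · refine ⟨N0 {q}, N0_mem_nhds _, {((some q : XX), j)},
      (isOpen_singleton_some q j).mem_nhds rfl, ?_⟩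
    rintro v hv w (rfl : w = _)
    rcases hv with rfl | ⟨p, hp, rfl⟩
    · rw [mul_none_left]; exact hUmem
    · have hpq : p ≠ q := by simpa using hp
      rw [mul_some_some hpq]; exact hUmem
  · refine ⟨N1 (fun m => if m = q.1 then {q.2} else ∅), N1_mem_nhds _,
      {((some q : XX), j)}, (isOpen_singleton_some q j).mem_nhds rfl, ?_⟩
    rintro v hv w (rfl : w = _)
    rcases hv with rfl | ⟨p, hp, rfl⟩
    · rw [mul_none_left]; exact hUmem
    · have hpq : p ≠ q := by
        rintro rfl
        simp at hp
      rw [mul_some_some hpq]; exact hUmem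


lemma contAt_some_none (i j : ZMod 2) (q : ℕ × ℕ) :
    ContinuousAt (fun p : SS × SS => p.1 * p.2) (((some q : XX), i), ((none : XX), j)) := by
  refine tendsto_mul_of ?_
  intro U hU
  rw [mul_none_right] at hU
  have hUmem : ((none : XX), i + j) ∈ U := mem_of_mem_nhds hU
  rcases zmod2_cases j with rfl | rfl
  · refine ⟨{((some q : XX), i)}, (isOpen_singleton_some q i).mem_nhds rfl,
      N0 {q}, N0_mem_nhds _, ?_⟩
    rintro v (rfl : v = _) w hw
    rcases hw with rfl | ⟨p, hp, rfl⟩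
    · rw [mul_none_right]; exact hUmem
    · have hqp : q ≠ p := by rintro rfl; simp at hp
      rw [mul_some_some hqp]; exact hUmem
  · refine ⟨{((some q : XX), i)}, (isOpen_singleton_some q i).mem_nhds rfl,
      N1 (fun m => if m = q.1 then {q.2} else ∅), N1_mem_nhds _, ?_⟩
    rintro v (rfl : v = _) w hw
    rcases hw with rfl | ⟨p, hp, rfl⟩
    · rw [mul_none_right]; exact hUmem
    · have hqp : q ≠ p := by rintro rfl; simp at hp
      rw [mul_some_some hqp]; exact hUmem

lemma contAt_none_none (i j : ZMod 2) :
    ContinuousAt (fun p : SS × SS => p.1 * p.2) (((none : XX), i), ((none : XX), j)) := by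
  refine tendsto_mul_of ?_
  intro U hU
  rw [mul_none_right] at hU
  rcases zmod2_cases i with rfl | rfl <;> rcases zmod2_cases j with rfl | rfl
  · -- i = 0, j = 0
    rw [show (0 : ZMod 2) + 0 = 0 by decide] at hU
    rcases exists_N0_subset hU with ⟨F, hF⟩
    refine ⟨N0 F, N0_mem_nhds _, N0 F, N0_mem_nhds _, ?_⟩
    rintro v hv w hw
    rcases hv with rfl | ⟨p, hp, rfl⟩
    · rcases hw with rfl | ⟨r, hr, rfl⟩
      · rw [mul_none_left]; exact hF (mem_N0_none F)
      · rw [mul_none_left]; exact hF (mem_N0_none F)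
    · rcases hw with rfl | ⟨r, hr, rfl⟩
      · rw [mul_none_right]; exact hF (mem_N0_none F)
      · rcases eq_or_ne p r with rfl | hpr
        · rw [mul_some_self]; exact hF (mem_N0_some hp)
        · rw [mul_some_some hpr]; exact hF (mem_N0_none F)
  · -- i = 0, j = 1
    rw [show (0 : ZMod 2) + 1 = 1 by decide] at hU
    rcases exists_N1_subset hU with ⟨g, hg⟩
    refine ⟨N0 ∅, N0_mem_nhds _, N1 g, N1_mem_nhds _, ?_⟩
    rintro v hv w hw
    rcases hv with rfl | ⟨p, hp, rfl⟩
    · rcases hw with rfl | ⟨r, hr, rfl⟩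
      · rw [mul_none_left]; exact hg (mem_N1_none g)
      · rw [mul_none_left]; exact hg (mem_N1_none g)
    · rcases hw with rfl | ⟨r, hr, rfl⟩
      · rw [mul_none_right]; exact hg (mem_N1_none g)
      · rcases eq_or_ne p r with rfl | hpr
        · rw [mul_some_self]; exact hg (mem_N1_some hr)
        · rw [mul_some_some hpr]; exact hg (mem_N1_none g)
  · -- i = 1, j = 0
    rw [show (1 : ZMod 2) + 0 = 1 by decide] at hU
    rcases exists_N1_subset hU with ⟨g, hg⟩
    refine ⟨N1 g, N1_mem_nhds _, N0 ∅, N0_mem_nhds _, ?_⟩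
    rintro v hv w hw
    rcases hv with rfl | ⟨p, hp, rfl⟩
    · rcases hw with rfl | ⟨r, hr, rfl⟩
      · rw [mul_none_left]; exact hg (mem_N1_none g)
      · rw [mul_none_left]; exact hg (mem_N1_none g)
    · rcases hw with rfl | ⟨r, hr, rfl⟩
      · rw [mul_none_right]; exact hg (mem_N1_none g)
      · rcases eq_or_ne p r with rfl | hpr
        · rw [mul_some_self]; exact hg (mem_N1_some hp)
        · rw [mul_some_some hpr]; exact hg (mem_N1_none g)
  · -- i = 1, j = 1
    rw [show (1 : ZMod 2) + 1 = 0 by decide] at hU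
    rcases exists_N0_subset hU with ⟨F, hF⟩
    set g : ℕ → Finset ℕ := fun m => (F.filter (fun q => q.1 = m)).image Prod.snd with hgdef
    have hgF : ∀ p : ℕ × ℕ, p.2 ∉ g p.1 → p ∉ F := by
      intro p hp hpF
      exact hp (Finset.mem_image.2 ⟨p, Finset.mem_filter.2 ⟨hpF, rfl⟩, rfl⟩)
    refine ⟨N1 g, N1_mem_nhds _, N1 g, N1_mem_nhds _, ?_⟩
    rintro v hv w hw
    rcases hv with rfl | ⟨p, hp, rfl⟩
    · rcases hw with rfl | ⟨r, hr, rfl⟩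
      · rw [mul_none_left]; exact hF (mem_N0_none F)
      · rw [mul_none_left]; exact hF (mem_N0_none F)
    · rcases hw with rfl | ⟨r, hr, rfl⟩
      · rw [mul_none_right]; exact hF (mem_N0_none F)
      · rcases eq_or_ne p r with rfl | hpr
        · rw [mul_some_self]; exact hF (mem_N0_some (hgF p hp))
        · rw [mul_some_some hpr]; exact hF (mem_N0_none F)

lemma cont_mul : Continuous (fun p : SS × SS => p.1 * p.2) := by
  rw [continuous_iff_continuousAt]
  rintro ⟨⟨x, i⟩, ⟨y, j⟩⟩
  rcases x with _ | p <;> rcases y with _ | q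
  · exact contAt_none_none i j
  · exact contAt_none_some i j q
  · exact contAt_some_none i j p
  · -- both isolated
    refine tendsto_mul_of ?_
    intro U hU
    exact ⟨{((some p : XX), i)}, (isOpen_singleton_some p i).mem_nhds rfl,
      {((some q : XX), j)}, (isOpen_singleton_some q j).mem_nhds rfl, by
        rintro v (rfl : v = _) w (rfl : w = _)
        exact mem_of_mem_nhds hU⟩


instance : T1Space SS := by
  refine ⟨fun s => ?_⟩
  rw [← isOpen_compl_iff, isOpen_iffS]
  constructor
  · intro _
    refine Set.Subsingleton.finite ?_
    intro p hp p' hp'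
    simp only [Set.mem_setOf_eq, Set.mem_compl_iff, not_not, Set.mem_singleton_iff] at hp hp'
    have := hp.trans hp'.symm
    simpa [Prod.ext_iff] using this
  · intro _ m
    refine Set.Subsingleton.finite ?_
    intro n hn n' hn'
    simp only [Set.mem_setOf_eq, Set.mem_compl_iff, not_not, Set.mem_singleton_iff] at hn hn'
    have := hn.trans hn'.symm
    simpa [Prod.ext_iff] using this

instance : RegularSpace SS := by
  refine RegularSpace.of_exists_mem_nhds_isClosed_subset ?_
  rintro ⟨x, i⟩ s hs
  rcases x with _ | p
  · rcases zmod2_cases i with rfl | rfl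
    · rcases exists_N0_subset hs with ⟨F, hF⟩
      exact ⟨N0 F, N0_mem_nhds F, isClosed_N0 F, hF⟩
    · rcases exists_N1_subset hs with ⟨g, hg⟩
      exact ⟨N1 g, N1_mem_nhds g, isClosed_N1 g, hg⟩
  · refine ⟨{((some p : XX), i)}, (isOpen_singleton_some p i).mem_nhds rfl,
      isClosed_singleton, ?_⟩
    rintro v (rfl : v = _)
    exact mem_of_mem_nhds hs

instance : T3Space SS := ⟨⟩

lemma not_metrizable : ¬ TopologicalSpace.MetrizableSpace SS := by
  intro hMet
  haveI := hMet
  haveI : FirstCountableTopology SS := inferInstance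
  have hcg : (𝓝 (((none : XX), (1 : ZMod 2)) : SS)).IsCountablyGenerated :=
    FirstCountableTopology.nhds_generated_countable _
  obtain ⟨t, ht⟩ := (𝓝 (((none : XX), (1 : ZMod 2)) : SS)).exists_antitone_basis
  have hmem : ∀ k : ℕ, ∃ n : ℕ, ((some (k, n) : XX), (1 : ZMod 2)) ∈ t k := by
    intro k
    have htk : t k ∈ 𝓝 (((none : XX), (1 : ZMod 2)) : SS) := ht.mem k
    rcases mem_nhds_iff.1 htk with ⟨V, hVt, hV, hVm⟩
    have hfin := (isOpen_iffS.1 hV).2 hVm k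
    have : {n : ℕ | ((some (k, n) : XX), (1 : ZMod 2)) ∈ V}.Infinite := by
      have := hfin.infinite_compl
      convert this using 1
      ext n
      simp [Set.mem_compl_iff]
    rcases this.nonempty with ⟨n, hn⟩
    exact ⟨n, hVt hn⟩
  choose f hf using hmem
  have hU : N1 (fun m => {f m}) ∈ 𝓝 (((none : XX), (1 : ZMod 2)) : SS) := N1_mem_nhds _
  rcases ht.toHasBasis.mem_iff.1 hU with ⟨k, -, hk⟩
  have := hk (hf k)
  rcases this with h | ⟨p, hp, h⟩
  · simp [Prod.ext_iff] at h
  · have h1 : ((k, f k) : ℕ × ℕ) = p := by simpa [Prod.ext_iff] using h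
    rw [← h1] at hp
    simp at hp

/-- The set of idempotents. -/
lemma idem_eq : {e : SS | e * e = e} = {s : SS | s.2 = 0} := by
  ext ⟨x, i⟩
  simp only [Set.mem_setOf_eq, mul_def, meet_self, Prod.ext_iff, eq_self_iff_true, true_and]
  revert i; decide

lemma isOpen_idem : IsOpen {e : SS | e * e = e} := by
  rw [idem_eq, isOpen_iffS]
  constructor
  · intro _
    convert Set.finite_empty
    ext p
    simp
  · intro h
    simp only [Set.mem_setOf_eq] at h
    exact absurd h (by decide)

lemma isCompact_idem : IsCompact {e : SS | e * e = e} := by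
  rw [idem_eq]
  refine isCompact_of_finite_subcover ?_
  intro ι U hUopen hcover
  classical
  have h0 : (((none : XX), (0 : ZMod 2)) : SS) ∈ {s : SS | s.2 = 0} := rfl
  rcases Set.mem_iUnion.1 (hcover h0) with ⟨i0, hi0⟩
  have hfin := (isOpen_iffS.1 (hUopen i0)).1 hi0
  have hchoice : ∀ p : ℕ × ℕ, ∃ i, ((some p : XX), (0 : ZMod 2)) ∈ U i := by
    intro p
    have : (((some p : XX), (0 : ZMod 2)) : SS) ∈ {s : SS | s.2 = 0} := rfl
    exact Set.mem_iUnion.1 (hcover this)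
  choose j hj using hchoice
  refine ⟨insert i0 (hfin.toFinset.image j), ?_⟩
  rintro ⟨x, i⟩ hxi
  have hi : i = 0 := hxi
  subst hi
  rcases x with _ | p
  · exact Set.mem_iUnion₂.2 ⟨i0, Finset.mem_insert_self _ _, hi0⟩
  · by_cases hp : ((some p : XX), (0 : ZMod 2)) ∉ U i0
    · have hpF : p ∈ hfin.toFinset := (Set.Finite.mem_toFinset _).2 hp
      exact Set.mem_iUnion₂.2 ⟨j p, Finset.mem_insert_of_mem
        (Finset.mem_image.2 ⟨p, hpF, rfl⟩), hj p⟩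
    · exact Set.mem_iUnion₂.2 ⟨i0, Finset.mem_insert_self _ _, not_not.1 hp⟩


def Eset : Set SS := {e : SS | e * e = e}

lemma snd_eq_zero_of_mem {s : SS} (h : s ∈ Eset) : s.2 = 0 := by
  have := idem_eq
  rw [Set.ext_iff] at this
  exact (this s).1 h

def EB : Set (Set ↥Eset) :=
  (Set.range fun p : ℕ × ℕ =>
      (Subtype.val ⁻¹' {(((some p : XX), (0 : ZMod 2)) : SS)} : Set ↥Eset)) ∪
  (Set.range fun F : Finset (ℕ × ℕ) => (Subtype.val ⁻¹' N0 F : Set ↥Eset))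

lemma EB_countable : EB.Countable :=
  (Set.countable_range _).union (Set.countable_range _)

lemma EB_basis : IsTopologicalBasis EB := by
  refine isTopologicalBasis_of_isOpen_of_nhds ?_ ?_
  · rintro u (⟨p, rfl⟩ | ⟨F, rfl⟩)
    · exact (isOpen_singleton_some p 0).preimage continuous_subtype_val
    · exact (isOpen_N0 F).preimage continuous_subtype_val
  · rintro a u hau hu
    rcases isOpen_induced_iff.1 hu with ⟨V, hV, rfl⟩
    have ha0 : a.val.2 = 0 := snd_eq_zero_of_mem a.property
    rcases hx : a.val.1 with _ | p
    · have haval : a.val = ((none : XX), (0 : ZMod 2)) := by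
        rw [Prod.ext_iff]; exact ⟨hx, ha0⟩
      have hVmem : ((none : XX), (0 : ZMod 2)) ∈ V := by
        rw [← haval]; exact hau
      rcases exists_N0_subset_of_isOpen hV hVmem with ⟨F, hF⟩
      refine ⟨Subtype.val ⁻¹' N0 F, Or.inr ⟨F, rfl⟩, ?_, fun b hb => hF hb⟩
      show a.val ∈ N0 F
      rw [haval]; exact mem_N0_none F
    · have haval : a.val = ((some p : XX), (0 : ZMod 2)) := by
        rw [Prod.ext_iff]; exact ⟨hx, ha0⟩
      refine ⟨Subtype.val ⁻¹' {(((some p : XX), (0 : ZMod 2)) : SS)},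
        Or.inl ⟨p, rfl⟩, ?_, ?_⟩
      · show a.val ∈ ({(((some p : XX), (0 : ZMod 2)) : SS)} : Set SS)
        simp [haval]
      · intro b hb
        have hb' : b.val = ((some p : XX), (0 : ZMod 2)) := hb
        show b.val ∈ V
        rw [hb', ← haval]
        exact hau

instance : SecondCountableTopology ↥Eset :=
  EB_basis.secondCountableTopology EB_countable

instance : TopologicalSpace.MetrizableSpace ↥Eset := inferInstance

lemma cube (x : SS) : x * x * x = x := by
  refine Prod.ext ?_ ?_
  · simp [mul_def, meet_self]
  · show x.2 + x.2 + x.2 = x.2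
    have : ∀ i : ZMod 2, i + i + i = i := by decide
    exact this x.2

end CliffordEx

/-- There exists a non-metrizable countable commutative topological Clifford semigroup `S`
(regular, with continuous multiplication and inversion) whose set of idempotents `E`
is compact, metrizable and open in `S`. -/
theorem exists_nonmetrizable_countable_clifford :
    ∃ (S : Type) (_ : TopologicalSpace S) (_ : CommSemigroup S) (inv : S → S),
      Countable S ∧ RegularSpace S ∧ T2Space S ∧
      Continuous (fun p : S × S => p.1 * p.2) ∧ Continuous inv ∧
      (∀ x : S, x * inv x * x = x ∧ inv x * x * inv x = inv x ∧ x * inv x = inv x * x) ∧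
      ¬ TopologicalSpace.MetrizableSpace S ∧
      IsCompact {e : S | e * e = e} ∧ IsOpen {e : S | e * e = e} ∧
      TopologicalSpace.MetrizableSpace {e : S | e * e = e} := by
  refine ⟨CliffordEx.SS, inferInstance, inferInstance, id, inferInstance, inferInstance,
    inferInstance, CliffordEx.cont_mul, continuous_id, ?_, CliffordEx.not_metrizable,
    CliffordEx.isCompact_idem, CliffordEx.isOpen_idem, ?_⟩
  · intro x
    exact ⟨CliffordEx.cube x, CliffordEx.cube x, rfl⟩
  · exact inferInstanceAs (TopologicalSpace.MetrizableSpace ↥CliffordEx.Eset)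
end

section
/- Let S be a Hausdorff countably compact Clifford topological semigroup such that the set of idempotents E is a G_δ-set in S and E is metrizable. Then S is first countable at every idempotent e ∈ E; in particular every singleton {e}, e ∈ E, is a G_δ-set in S and admits a countable neighborhood base. -/
/-- `X` is countably compact: every countable open cover has a finite subcover. -/
def CountablyCompact (X : Type*) [TopologicalSpace X] : Prop :=
  ∀ U : ℕ → Set X, (∀ n, IsOpen (U n)) → (⋃ n, U n) = Set.univ →
    ∃ N : Finset ℕ, (⋃ n ∈ N, U n) = Set.univ

/-- A Hausdorff regular countably compact Clifford topological semigroup whose set of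
idempotents `E` is a metrizable `G_δ`-set is first countable at every idempotent;
in particular every singleton `{e}`, `e ∈ E`, is a `G_δ`-set. -/
theorem first_countable_at_idempotents {S : Type*} [TopologicalSpace S] [Semigroup S]
    [ContinuousMul S] [T2Space S] [RegularSpace S]
    (hcc : CountablyCompact S)
    (hClifford : ∀ x : S, ∃ y : S, x * y * x = x ∧ y * x * y = y ∧ x * y = y * x)
    (hGδ : IsGδ {e : S | e * e = e})
    (hmetr : TopologicalSpace.MetrizableSpace {e : S | e * e = e}) :
    ∀ e : S, e * e = e → IsGδ ({e} : Set S) ∧ (nhds e).IsCountablyGenerated := by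
  intro e he
  set E : Set S := {e : S | e * e = e} with hEdef
  -- Step 1: `{e}` is a Gδ set in `S`.
  have hsingle : IsGδ ({⟨e, he⟩} : Set E) := IsGδ.singleton _
  obtain ⟨W, hWopen, hWeq⟩ := hsingle.eq_iInter_nat
  choose O hOopen hOeq using fun n => isOpen_induced_iff.1 (hWopen n)
  obtain ⟨G, hGopen, hGeq⟩ := hGδ.eq_iInter_nat
  have hUeq : (⋂ n, G n ∩ O n) = ({e} : Set S) := by
    ext x
    simp only [Set.mem_iInter, Set.mem_inter_iff, Set.mem_singleton_iff]
    constructor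
    · intro hx
      have hxE : x ∈ E := by
        rw [hGeq]; exact Set.mem_iInter.2 fun n => (hx n).1
      have : (⟨x, hxE⟩ : E) ∈ ⋂ n, W n := by
        refine Set.mem_iInter.2 fun n => ?_
        rw [← hOeq n]; exact (hx n).2
      rw [← hWeq] at this
      simpa using congrArg Subtype.val this
    · intro hx n
      have heE : e ∈ E := he
      have heW : (⟨e, heE⟩ : E) ∈ W n :=
        Set.mem_iInter.1 (by rw [← hWeq]; exact Set.mem_singleton _) n
      rw [← hOeq n] at heW
      rw [hx]
      refine ⟨?_, heW⟩
      have : e ∈ ⋂ n, G n := by rw [← hGeq]; exact heE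
      exact Set.mem_iInter.1 this n
  set U : ℕ → Set S := fun n => G n ∩ O n with hUdef
  have hUopen : ∀ n, IsOpen (U n) := fun n => (hGopen n).inter (hOopen n)
  have hGδe : IsGδ ({e} : Set S) := by
    rw [← hUeq]; exact .iInter_of_isOpen hUopen
  refine ⟨hGδe, ?_⟩
  -- Step 2: first countability at `e`.
  have heU : ∀ n, e ∈ U n := fun n =>
    Set.mem_iInter.1 (by rw [hUeq]; exact Set.mem_singleton _) n
  choose t htn htc hts using fun n =>
    exists_mem_nhds_isClosed_subset ((hUopen n).mem_nhds (heU n))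
  set K : ℕ → Set S := fun n => ⋂ k : Fin (n + 1), t k with hKdef
  have hKnhds : ∀ n, K n ∈ nhds e := fun n => Filter.iInter_mem.2 fun k => htn k
  have hKclosed : ∀ n, IsClosed (K n) := fun n => isClosed_iInter fun k => htc k
  have hKsub : ∀ n, K n ⊆ t n := fun n x hx =>
    Set.mem_iInter.1 hx ⟨n, Nat.lt_succ_self n⟩
  have hKmono : ∀ {n m : ℕ}, n ≤ m → K m ⊆ K n := by
    intro n m hnm x hx
    exact Set.mem_iInter.2 fun k =>
      Set.mem_iInter.1 hx ⟨k, lt_of_lt_of_le k.2 (by omega)⟩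
  have key : ∀ Ω : Set S, IsOpen Ω → e ∈ Ω → ∃ n, K n ⊆ Ω := by
    intro Ω hΩ heΩ
    by_contra hcon
    push_neg at hcon
    have hC : ∀ n, (K n \ Ω).Nonempty := by
      intro n
      obtain ⟨x, hx1, hx2⟩ := Set.not_subset.1 (hcon n)
      exact ⟨x, hx1, hx2⟩
    have hempty : (⋂ n, K n \ Ω) = ∅ := by
      by_contra hne
      obtain ⟨y, hy⟩ := Set.nonempty_iff_ne_empty.2 hne
      have hy' : ∀ n, y ∈ K n \ Ω := fun n => Set.mem_iInter.1 hy n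
      have : y ∈ ⋂ n, U n := Set.mem_iInter.2 fun n => hts n (hKsub n (hy' n).1)
      rw [hUeq] at this
      exact (hy' 0).2 (this ▸ heΩ)
    obtain ⟨N, hN⟩ := hcc (fun n => (K n \ Ω)ᶜ)
      (fun n => ((hKclosed n).sdiff hΩ).isOpen_compl)
      (by
        rw [← Set.compl_iInter, hempty, Set.compl_empty])
    obtain ⟨x, hx1, hx2⟩ := hC (N.sup id)
    have : x ∈ ⋃ n ∈ N, (K n \ Ω)ᶜ := hN ▸ Set.mem_univ x
    obtain ⟨n, hnN, hxn⟩ := Set.mem_iUnion₂.1 this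
    exact hxn ⟨hKmono (Finset.le_sup (f := id) hnN) hx1, hx2⟩
  have hbasis : (nhds e).HasBasis (fun _ : ℕ => True) K := by
    refine Filter.hasBasis_iff.2 fun s => ⟨fun hs => ?_, ?_⟩
    · obtain ⟨Ω, hΩs, hΩopen, heΩ⟩ := mem_nhds_iff.1 hs
      obtain ⟨n, hn⟩ := key Ω hΩopen heΩ
      exact ⟨n, trivial, hn.trans hΩs⟩
    · rintro ⟨n, -, hn⟩
      exact Filter.mem_of_superset (hKnhds n) hn
  exact hbasis.isCountablyGenerated
end

section
/- Let S be a countably compact Clifford topological semigroup which is first countable at an idempotent e and whose inversion is continuous at e. Then the maximal subgroup H_e = {x ∈ S : x*x⁻¹ = e} is a metrizable topological group (with the subspace topology). -/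
open Filter Topology Uniformity

theorem group_inverse_unique {S : Type*} [Semigroup S] {y z₁ z₂ : S}
    (a₁ : y * z₁ * y = y) (b₁ : z₁ * y * z₁ = z₁) (c₁ : y * z₁ = z₁ * y)
    (a₂ : y * z₂ * y = y) (b₂ : z₂ * y * z₂ = z₂) (c₂ : y * z₂ = z₂ * y) :
    z₁ = z₂ := by
  have h : y * z₁ = y * z₂ :=
    calc y * z₁ = y * z₁ * (y * z₂) := by
          rw [c₁, c₂, mul_assoc, ← mul_assoc y z₂ y, a₂]
      _ = y * z₂ := by rw [← mul_assoc, a₁]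
  calc z₁ = z₁ * y * z₁ := b₁.symm
    _ = y * z₂ * z₂ := by rw [mul_assoc, h, ← mul_assoc, ← c₁, h]
    _ = z₂ := by rw [c₂, b₂]

theorem IsTopologicalGroup.metrizableSpace_of_isCountablyGenerated {G : Type*} [Group G]
    [TopologicalSpace G] [IsTopologicalGroup G] [T0Space G] [(𝓝 (1 : G)).IsCountablyGenerated] :
    TopologicalSpace.MetrizableSpace G := by
  let := IsTopologicalGroup.rightUniformSpace G
  have : (𝓤 G).IsCountablyGenerated := comap.isCountablyGenerated _ _
  exact UniformSpace.metrizableSpace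

/-- `inv x` is the inverse of `x` in a subgroup of `S` containing it, so `S` is a union of
groups. -/
structure IsCliffordInv_s12 {S : Type*} [Semigroup S] (inv : S → S) : Prop where
  mul_inv_mul (x : S) : x * inv x * x = x
  inv_mul_inv (x : S) : inv x * x * inv x = inv x
  mul_inv_comm (x : S) : x * inv x = inv x * x

def maximalSubgroup {S : Type*} [Mul S] (inv : S → S) (e : S) : Set S := {x | x * inv x = e}

namespace IsCliffordInv_s12

variable {S : Type*} [Semigroup S] {inv : S → S} (hS : IsCliffordInv_s12 inv) {e x y : S}
include hS

theorem inv_eq_of (a : y * x * y = y) (b : x * y * x = x) (c : y * x = x * y) : inv y = x :=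
  group_inverse_unique (hS.mul_inv_mul y) (hS.inv_mul_inv y) (hS.mul_inv_comm y) a b c

theorem inv_inv (x : S) : inv (inv x) = x :=
  hS.inv_eq_of (hS.inv_mul_inv x) (hS.mul_inv_mul x) (hS.mul_inv_comm x).symm

theorem inv_of_mul_self (he : e * e = e) : inv e = e :=
  hS.inv_eq_of (by rw [he, he]) (by rw [he, he]) rfl

section

variable (hx : x * inv x = e)
include hx

theorem inv_mul_self_eq : inv x * x = e := (hS.mul_inv_comm x).symm.trans hx

theorem mul_idem : x * e = x := by
  rw [← hS.inv_mul_self_eq hx, ← mul_assoc, hS.mul_inv_mul]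

theorem idem_mul : e * x = x := by
  rw [← hx, hS.mul_inv_mul]

theorem idem_mul_inv : e * inv x = inv x := by
  rw [← hS.inv_mul_self_eq hx, hS.inv_mul_inv]

theorem inv_mul_idem : inv x * e = inv x := by
  rw [← hx, ← mul_assoc, hS.inv_mul_inv]

end

theorem mul_mul_inv_mul_inv (hx : x * inv x = e) (hy : y * inv y = e) :
    x * y * (inv y * inv x) = e := by
  rw [mul_assoc x y, ← mul_assoc y, hy, hS.idem_mul_inv hx, hx]

theorem inv_mul_inv_mul_mul (hx : x * inv x = e) (hy : y * inv y = e) :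
    inv y * inv x * (x * y) = e := by
  rw [mul_assoc (inv y), ← mul_assoc (inv x), hS.inv_mul_self_eq hx, hS.idem_mul hy,
    hS.inv_mul_self_eq hy]

theorem inv_mul (hx : x * inv x = e) (hy : y * inv y = e) : inv (x * y) = inv y * inv x := by
  refine hS.inv_eq_of ?_ ?_ ?_
  · rw [hS.mul_mul_inv_mul_inv hx hy, ← mul_assoc, hS.idem_mul hx]
  · rw [hS.inv_mul_inv_mul_mul hx hy, ← mul_assoc, hS.idem_mul_inv hy]
  · rw [hS.mul_mul_inv_mul_inv hx hy, hS.inv_mul_inv_mul_mul hx hy]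

theorem mul_mem (hx : x ∈ maximalSubgroup inv e) (hy : y ∈ maximalSubgroup inv e) :
    x * y ∈ maximalSubgroup inv e := by
  show x * y * inv (x * y) = e
  rw [hS.inv_mul hx hy]
  exact hS.mul_mul_inv_mul_inv hx hy

theorem inv_mem (hx : x ∈ maximalSubgroup inv e) : inv x ∈ maximalSubgroup inv e := by
  show inv x * inv (inv x) = e
  rw [hS.inv_inv]
  exact hS.inv_mul_self_eq hx

theorem mem_of_mul_self (he : e * e = e) : e ∈ maximalSubgroup inv e := by
  show e * inv e = e
  rw [hS.inv_of_mul_self he, he]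

abbrev maximalSubgroupGroup (he : e * e = e) : Group (maximalSubgroup inv e) where
  mul a b := ⟨a * b, hS.mul_mem a.2 b.2⟩
  mul_assoc a b c := Subtype.ext (mul_assoc a.1 b.1 c.1)
  one := ⟨e, hS.mem_of_mul_self he⟩
  one_mul a := Subtype.ext (hS.idem_mul a.2)
  mul_one a := Subtype.ext (hS.mul_idem a.2)
  inv a := ⟨inv a, hS.inv_mem a.2⟩
  inv_mul_cancel a := Subtype.ext (hS.inv_mul_self_eq a.2)

variable [TopologicalSpace S] [ContinuousMul S]

theorem continuousOn_inv (hinv : ContinuousAt inv e) :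
    ContinuousOn inv (maximalSubgroup inv e) := by
  intro x hx
  have translate : ∀ y ∈ maximalSubgroup inv e, inv (inv x * y) * inv x = inv y := by
    intro y hy
    rw [hS.inv_mul (hS.inv_mem hx) hy, hS.inv_inv, mul_assoc, hx, hS.inv_mul_idem hy]
  have hinv_x : ContinuousAt inv (inv x * x) := by rwa [hS.inv_mul_self_eq hx]
  have hcont : ContinuousAt (fun y => inv (inv x * y) * inv x) x :=
    (hinv_x.comp (continuous_const_mul (inv x)).continuousAt).mul continuousAt_const
  exact hcont.continuousWithinAt.congr (fun y hy => (translate y hy).symm) (translate x hx).symm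

theorem isTopologicalGroup (he : e * e = e) (hinv : ContinuousAt inv e) :
    letI := hS.maximalSubgroupGroup he
    IsTopologicalGroup (maximalSubgroup inv e) :=
  letI := hS.maximalSubgroupGroup he
  { continuous_mul := (continuous_subtype_val.fst'.mul continuous_subtype_val.snd').subtype_mk _
    continuous_inv := (hS.continuousOn_inv hinv).domRestrict.subtype_mk _ }

end IsCliffordInv_s12

theorem maximal_subgroup_metrizable_general {S : Type*} [TopologicalSpace S] [Semigroup S]
    [ContinuousMul S] [T2Space S]
    (inv : S → S)
    (h1 : ∀ x : S, x * inv x * x = x)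
    (h2 : ∀ x : S, inv x * x * inv x = inv x)
    (h3 : ∀ x : S, x * inv x = inv x * x)
    (e : S) (he : e * e = e)
    (hfc : (nhds e).IsCountablyGenerated)
    (hinv_e : ContinuousAt inv e) :
    (∀ x ∈ {x : S | x * inv x = e}, ∀ y ∈ {x : S | x * inv x = e},
        x * y ∈ {x : S | x * inv x = e}) ∧
    e ∈ {x : S | x * inv x = e} ∧
    (∀ x ∈ {x : S | x * inv x = e}, inv x ∈ {x : S | x * inv x = e}) ∧
    (∀ x ∈ {x : S | x * inv x = e},
        x * e = x ∧ e * x = x ∧ x * inv x = e ∧ inv x * x = e) ∧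
    ContinuousOn inv {x : S | x * inv x = e} ∧
    TopologicalSpace.MetrizableSpace {x : S | x * inv x = e} := by
  have hS : IsCliffordInv_s12 inv := ⟨h1, h2, h3⟩
  let := hS.maximalSubgroupGroup he
  have := hS.isTopologicalGroup he hinv_e
  have : (𝓝 (1 : maximalSubgroup inv e)).IsCountablyGenerated := by
    rw [nhds_subtype_eq_comap]
    exact comap.isCountablyGenerated (𝓝 e) _
  exact ⟨fun x hx y hy => hS.mul_mem hx hy, hS.mem_of_mul_self he, fun x hx => hS.inv_mem hx,
    fun x hx => ⟨hS.mul_idem hx, hS.idem_mul hx, hx, hS.inv_mul_self_eq hx⟩,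
    hS.continuousOn_inv hinv_e,
    IsTopologicalGroup.metrizableSpace_of_isCountablyGenerated (G := maximalSubgroup inv e)⟩

/-- In a Hausdorff countably compact Clifford topological semigroup which is first
countable at an idempotent `e` and has inversion continuous at `e`, the maximal
subgroup `H_e = {x : x * x⁻¹ = e}` is a metrizable topological group: it is closed
under multiplication and inversion, has identity `e` and inverses, the inversion is
continuous on it, and it is metrizable in the subspace topology. -/
theorem maximal_subgroup_metrizable {S : Type*} [TopologicalSpace S] [Semigroup S]
    [ContinuousMul S] [T2Space S]
    (hcc : CountablyCompact S) (inv : S → S)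
    (h1 : ∀ x : S, x * inv x * x = x)
    (h2 : ∀ x : S, inv x * x * inv x = inv x)
    (h3 : ∀ x : S, x * inv x = inv x * x)
    (e : S) (he : e * e = e)
    (hfc : (nhds e).IsCountablyGenerated)
    (hinv_e : ContinuousAt inv e) :
    (∀ x ∈ {x : S | x * inv x = e}, ∀ y ∈ {x : S | x * inv x = e},
        x * y ∈ {x : S | x * inv x = e}) ∧
    e ∈ {x : S | x * inv x = e} ∧
    (∀ x ∈ {x : S | x * inv x = e}, inv x ∈ {x : S | x * inv x = e}) ∧
    (∀ x ∈ {x : S | x * inv x = e},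
        x * e = x ∧ e * x = x ∧ x * inv x = e ∧ inv x * x = e) ∧
    ContinuousOn inv {x : S | x * inv x = e} ∧
    TopologicalSpace.MetrizableSpace {x : S | x * inv x = e} :=
  maximal_subgroup_metrizable_general inv h1 h2 h3 e he hfc hinv_e
end

section
/- Let E be a semilattice (commutative idempotent semigroup) with partial order x ≤ y iff x*y = x, endowed with a compact Hausdorff topology making multiplication continuous. Then for each λ ∈ E the lower cone ↓λ = {e ∈ E : e ≤ λ} is closed in E, and for any downward-directed (chain) subset L ⊆ E, the set ↓L = ⋂_{λ∈L} ↓λ is a nonempty closed subset, and every open set containing ↓L contains ↓λ for some λ ∈ L. -/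
/-! The lower cones `{e | e * a = e}` are closed, being equalizers of two continuous maps, hence
compact; on a chain they form a family directed by reverse inclusion, each member nonempty since
`a` lies in its own cone. Compactness then gives both a nonempty intersection and that an open
neighbourhood of the intersection contains a single cone. -/

open Set

theorem isClosed_setOf_mul_eq {E : Type*} [Mul E] [TopologicalSpace E] [ContinuousMul E]
    [T2Space E] (a : E) : IsClosed {e : E | e * a = e} :=
  isClosed_eq (continuous_id.mul continuous_const) continuous_id

theorem setOf_mul_eq_subset_of_mul_eq {E : Type*} [Semigroup E] {a b : E} (hab : a * b = a) :
    {e : E | e * a = e} ⊆ {e : E | e * b = e} := fun e (he : e * a = e) =>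
  calc e * b = e * a * b := by rw [he]
    _ = e := by rw [mul_assoc, hab, he]

theorem directed_setOf_mul_eq_of_chain {E : Type*} [CommSemigroup E] {L : Set E}
    (hchain : ∀ a ∈ L, ∀ b ∈ L, a * b = a ∨ a * b = b) :
    Directed (· ⊇ ·) (fun a : L => {e : E | e * (a : E) = e}) := by
  intro a b
  rcases hchain a a.2 b b.2 with hab | hab
  · exact ⟨a, subset_rfl, setOf_mul_eq_subset_of_mul_eq hab⟩
  · exact ⟨b, setOf_mul_eq_subset_of_mul_eq ((mul_comm (b : E) a).trans hab), subset_rfl⟩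

/-- In a compact Hausdorff topological semilattice `E` (commutative idempotent semigroup
with continuous multiplication), with order `x ≤ y` iff `x * y = x`: every lower cone
`↓a = {e : e * a = e}` is closed; for a nonempty chain `L`, the set `↓L = ⋂_{a ∈ L} ↓a`
is a nonempty closed set, and every open set containing `↓L` contains some `↓a`, `a ∈ L`. -/
theorem semilattice_lower_cones {E : Type*} [CommSemigroup E] [TopologicalSpace E]
    [CompactSpace E] [T2Space E] [ContinuousMul E]
    (hidem : ∀ x : E, x * x = x) :
    (∀ a : E, IsClosed {e : E | e * a = e}) ∧
    (∀ L : Set E, L.Nonempty → (∀ a ∈ L, ∀ b ∈ L, a * b = a ∨ a * b = b) →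
      IsClosed (⋂ a ∈ L, {e : E | e * a = e}) ∧
      (⋂ a ∈ L, {e : E | e * a = e}).Nonempty ∧
      (∀ W : Set E, IsOpen W → (⋂ a ∈ L, {e : E | e * a = e}) ⊆ W →
        ∃ a ∈ L, {e : E | e * a = e} ⊆ W)) := by
  refine ⟨isClosed_setOf_mul_eq, fun L hL hchain => ?_⟩
  have : Nonempty L := hL.to_subtype
  have hdir := directed_setOf_mul_eq_of_chain hchain
  have hcompact (a : L) : IsCompact {e : E | e * (a : E) = e} :=
    (isClosed_setOf_mul_eq (a : E)).isCompact
  refine ⟨isClosed_biInter fun a _ => isClosed_setOf_mul_eq a, ?_, fun W hW hsub => ?_⟩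
  · rw [biInter_eq_iInter]
    exact IsCompact.nonempty_iInter_of_directed_nonempty_isCompact_isClosed _ hdir
      (fun a => ⟨a, hidem a⟩) hcompact fun a => isClosed_setOf_mul_eq (a : E)
  · rw [biInter_eq_iInter] at hsub
    obtain ⟨a, ha⟩ := exists_subset_nhds_of_isCompact hdir hcompact
      fun x hx => hW.mem_nhds (hsub hx)
    exact ⟨a, a.2, ha⟩
end

section
/- Every Hausdorff countably compact Clifford topological semigroup S whose set of idempotents E is a metrizable G_δ-subset of S is topologically periodic: for every a ∈ S and every neighborhood O of a there exists an integer n ≥ 2 with a^n ∈ O. -/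
/-- `spow a n` is the power `a ^ n` in a semigroup, for `n ≥ 1` (with `spow a 0 = a`). -/
def spow {S : Type*} [Semigroup S] (a : S) : ℕ → S
  | 0 => a
  | 1 => a
  | (n + 2) => spow a (n + 1) * a

/-!
Every idempotent has a countable neighbourhood base: it is a `G_δ` point of the metrizable
`G_δ`-set of idempotents, hence of `S`. So subsequences converging to idempotents can be extracted.

Let `b` be the group inverse of `a` and `e = ab`, so that `aⁿbⁿ = e` and `aⁿbᵗ = aⁿ⁻ᵗ`.
If an idempotent `f` is a cluster point of `(aⁿ)`, take `a^{φ k} → f` and a cluster point `g` of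
`(b^{φ k})`; then `fg = e` and `fe = f`, whence `f = e`. Such an `f` exists: if `x` is a cluster
point of `(aⁿ)` with group inverse `x'`, take `x'a^{φ k} → x'x`, so `xx'a^{φ k} → x`, and a
cluster point `y` of `(b^{φ k})`; then `xy = xx'e` is idempotent and, as a limit of the cluster
points `xbᵗ`, again a cluster point of `(aⁿ)`. Hence `e` clusters `(aⁿ)`, and `a = ea` clusters
`(aⁿ⁺¹)`.
-/

open Filter Topology Set

section GroupInverse

variable {S : Type*} [Semigroup S]

structure IsGroupInverse (a b : S) : Prop where
  mul_inv_mul : a * b * a = a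
  inv_mul_inv : b * a * b = b
  commute : Commute a b

namespace IsGroupInverse

variable {a b c : S}

theorem symm (h : IsGroupInverse a b) : IsGroupInverse b a :=
  ⟨h.inv_mul_inv, h.mul_inv_mul, h.commute.symm⟩

theorem isIdempotentElem_mul (h : IsGroupInverse a b) : IsIdempotentElem (a * b) := by
  rw [IsIdempotentElem, mul_assoc, ← mul_assoc b, h.inv_mul_inv]

theorem mul_mul_inv (h : IsGroupInverse a b) : a * (a * b) = a := by
  rw [h.commute.eq, ← mul_assoc, h.mul_inv_mul]

theorem commute_right (h : IsGroupInverse a b) (hc : Commute c a) : Commute c b := by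
  have hca (x : S) : c * (a * x) = a * (c * x) := by rw [← mul_assoc, hc.eq, mul_assoc]
  have hba (x : S) : b * (a * x) = a * (b * x) := by rw [← mul_assoc, ← h.commute.eq, mul_assoc]
  have haba (x : S) : a * (b * (a * x)) = a * x := by
    rw [← mul_assoc, ← mul_assoc, h.mul_inv_mul]
  have hbab : b * (a * b) = b := by rw [← mul_assoc, h.inv_mul_inv]
  have hl : c * (a * b) = a * (b * (c * (a * b))) :=
    (hca b).trans <| (haba (c * b)).symm.trans <| by rw [hca b]
  have hr : a * (b * c) = a * (b * (c * (a * b))) := by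
    calc a * (b * c) = b * (c * (a * (b * a))) := by
          rw [← hba, ← hc.eq, ← mul_assoc a b a, h.mul_inv_mul]
      _ = a * (b * (c * (a * b))) := by rw [hca, hba, h.commute.eq]
  have hcomm : Commute c (a * b) := by
    rw [Commute, SemiconjBy, hl, mul_assoc, hr]
  calc c * b = c * (b * (a * b)) := by rw [hbab]
    _ = a * b * c * b := by rw [hba, ← mul_assoc a b b, ← mul_assoc, hcomm.eq]
    _ = b * (c * (a * b)) := by rw [mul_assoc, mul_assoc, ← hba, ← hca]
    _ = b * c := by rw [hcomm.eq, ← mul_assoc, hbab]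

end IsGroupInverse

theorem spow_succ (a : S) {n : ℕ} (hn : n ≠ 0) : spow a (n + 1) = spow a n * a := by
  obtain ⟨m, rfl⟩ := Nat.exists_eq_succ_of_ne_zero hn
  rfl

theorem spow_add (a : S) {m n : ℕ} (hm : m ≠ 0) (hn : n ≠ 0) :
    spow a (m + n) = spow a m * spow a n := by
  induction n with
  | zero => exact absurd rfl hn
  | succ n ih =>
    rcases eq_or_ne n 0 with rfl | hn'
    · exact spow_succ a hm
    · rw [← add_assoc, spow_succ a (by omega), ih hn', spow_succ a hn', mul_assoc]

theorem Commute.spow_right {c a : S} (h : Commute c a) (n : ℕ) : Commute c (spow a n) := by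
  induction n with
  | zero => exact h
  | succ n ih =>
    rcases eq_or_ne n 0 with rfl | hn
    · exact h
    · rw [spow_succ a hn]
      exact ih.mul_right h

namespace IsGroupInverse

variable {a b : S}

theorem mul_spow (h : IsGroupInverse a b) (n : ℕ) : a * b * spow a n = spow a n := by
  induction n with
  | zero => exact h.mul_inv_mul
  | succ n ih =>
    rcases eq_or_ne n 0 with rfl | hn
    · exact h.mul_inv_mul
    · rw [spow_succ a hn, ← mul_assoc, ih]

theorem commute_spow (h : IsGroupInverse a b) (n : ℕ) : Commute (a * b) (spow a n) :=
  Commute.spow_right (h.mul_inv_mul.trans h.mul_mul_inv.symm) n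

theorem spow_mul (h : IsGroupInverse a b) (n : ℕ) : spow a n * (a * b) = spow a n := by
  rw [← (h.commute_spow n).eq, h.mul_spow]

theorem spow_mul_spow (h : IsGroupInverse a b) (n : ℕ) : spow a n * spow b n = a * b := by
  induction n with
  | zero => rfl
  | succ n ih =>
    rcases eq_or_ne n 0 with rfl | hn
    · rfl
    · calc spow a (n + 1) * spow b (n + 1) = spow a n * spow b n * (a * b) := by
            rw [spow_succ a hn, spow_succ b hn, mul_assoc, ← mul_assoc a,
              (h.commute.spow_right n).eq]
            simp only [mul_assoc]
        _ = a * b := by rw [ih, h.isIdempotentElem_mul.eq]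

theorem spow_mul_spow_of_lt (h : IsGroupInverse a b) {n t : ℕ} (ht : t ≠ 0) (htn : t < n) :
    spow a n * spow b t = spow a (n - t) := by
  obtain ⟨m, rfl⟩ := Nat.exists_eq_add_of_lt htn
  rw [show t + m + 1 - t = m + 1 by omega, show t + m + 1 = m + 1 + t by omega,
    spow_add a m.succ_ne_zero ht, mul_assoc, h.spow_mul_spow, h.spow_mul]

end IsGroupInverse

end GroupInverse

section Topology

variable {X : Type*} [TopologicalSpace X]

theorem CountablyCompact.countablyCompactSpace (h : CountablyCompact X) :
    CountablyCompactSpace X :=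
  ⟨isCountablyCompact_iff_countable_open_cover.2 fun U hU hcover =>
    (h U hU (univ_subset_iff.1 hcover)).imp fun _ ht => ht.symm.subset⟩

theorem exists_mapClusterPt_of_countablyCompactSpace [CountablyCompactSpace X] (u : ℕ → X) :
    ∃ x, MapClusterPt x atTop u :=
  let ⟨x, _, hx⟩ := CountablyCompactSpace.isCountablyCompact_univ.seq_clusterPt u
    (.of_forall fun _ => trivial)
  ⟨x, hx⟩

/-- In a regular countably compact space, closed neighbourhoods `C n ⊆ W n` of a point
`{x} = ⋂ W n` form a neighbourhood base: the closed set `(interior U)ᶜ` is covered by the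
open sets `(C n)ᶜ`, hence by finitely many of them. -/
theorem isCountablyGenerated_nhds_of_isGδ_singleton [CountablyCompactSpace X] [RegularSpace X]
    {x : X} (hx : IsGδ {x}) : (𝓝 x).IsCountablyGenerated := by
  obtain ⟨W, hWo, hW⟩ := hx.eq_iInter_nat
  have hxW : ∀ n, x ∈ W n := mem_iInter.1 (hW ▸ mem_singleton x)
  choose C hCx hCc hCW using fun n => exists_mem_nhds_isClosed_subset ((hWo n).mem_nhds (hxW n))
  refine isCountablyGenerated_of_seq ⟨C, le_antisymm (le_iInf fun n => le_principal_iff.2 (hCx n))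
    fun U hU => ?_⟩
  have hcover : (interior U)ᶜ ⊆ ⋃ n, (C n)ᶜ := fun y hy => by
    have hyx : y ∉ ⋂ n, W n := hW ▸ fun hyx => hy (hyx ▸ mem_interior_iff_mem_nhds.2 hU)
    obtain ⟨n, hn⟩ : ∃ n, y ∉ W n := by simpa using hyx
    exact mem_iUnion.2 ⟨n, fun hy => hn (hCW n hy)⟩
  obtain ⟨t, ht⟩ := isOpen_interior.isClosed_compl.isCountablyCompact.elim_finite_subcover
    (fun n => (hCc n).isOpen_compl) hcover
  refine mem_of_superset ((biInter_finset_mem t).2 fun n _ => mem_iInf_of_mem n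
    (mem_principal_self _)) fun y hy => interior_subset (not_not.1 fun hyU => ?_)
  obtain ⟨n, hn, hyn⟩ := mem_iUnion₂.1 (ht hyU)
  exact hyn (mem_iInter₂.1 hy n hn)

theorem IsGδ.image_val {E : Set X} (hE : IsGδ E) {s : Set E} (hs : IsGδ s) :
    IsGδ (((↑) : E → X) '' s) := by
  obtain ⟨U, hUo, rfl⟩ := hs.eq_iInter_nat
  choose V hVo hVU using fun n => isOpen_induced_iff.1 (hUo n)
  rw [← funext hVU, ← preimage_iInter, Subtype.image_preimage_coe]
  exact hE.inter (.iInter_of_isOpen hVo)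

theorem IsGδ.isGδ_singleton_of_mem {E : Set X} [TopologicalSpace.MetrizableSpace E]
    (hE : IsGδ E) {x : X} (hx : x ∈ E) : IsGδ {x} := by
  let := TopologicalSpace.metrizableSpaceMetric E
  simpa using hE.image_val (IsGδ.singleton (⟨x, hx⟩ : E))

theorem Filter.Tendsto.mapClusterPt_prodMk {Y ι : Type*} [TopologicalSpace Y] {l : Filter ι}
    {u : ι → X} {v : ι → Y} {x : X} {y : Y} (hu : Tendsto u l (𝓝 x))
    (hv : MapClusterPt y l v) : MapClusterPt (x, y) l fun n => (u n, v n) := by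
  rw [((𝓝 x).basis_sets.prod_nhds (𝓝 y).basis_sets).mapClusterPt_iff_frequently]
  rintro ⟨s, t⟩ ⟨hs, ht⟩
  exact ((mapClusterPt_iff_frequently.1 hv t ht).and_eventually (hu hs)).mono
    fun _ hn => ⟨hn.2, hn.1⟩

end Topology

section TopologicalSemigroup

variable {S : Type*} [TopologicalSpace S] [Semigroup S] [ContinuousMul S]

namespace IsGroupInverse

variable {a b : S}

theorem mapClusterPt_mul_spow (h : IsGroupInverse a b) {x : S}
    (hx : MapClusterPt x atTop (spow a)) {t : ℕ} (ht : t ≠ 0) :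
    MapClusterPt (x * spow b t) atTop (spow a) := by
  have hshift : spow a ∘ (· - t) =ᶠ[atTop] fun n => spow a n * spow b t :=
    (eventually_gt_atTop t).mono fun n hn => (h.spow_mul_spow_of_lt ht hn).symm
  exact (hshift.mapClusterPt_iff.2
    (hx.continuousAt_comp (continuous_mul_const _).continuousAt)).of_comp (tendsto_sub_atTop_nat t)

theorem exists_spow_mem (h : IsGroupInverse a b)
    (he : MapClusterPt (a * b) atTop (spow a)) {O : Set S} (hO : O ∈ 𝓝 a) :
    ∃ n, 2 ≤ n ∧ spow a n ∈ O := by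
  have ha : MapClusterPt a atTop fun n => spow a n * a := by
    simpa only [h.mul_inv_mul, Function.comp_def] using
      he.continuousAt_comp (continuous_mul_const a).continuousAt
  obtain ⟨n, hnO, hn⟩ := ((ha.frequently hO).and_eventually (eventually_ne_atTop 0)).exists
  exact ⟨n + 1, by omega, spow_succ a hn ▸ hnO⟩

end IsGroupInverse

variable [T2Space S]

theorem MapClusterPt.commute {ι : Type*} {l : Filter ι} {u : ι → S} {x c : S}
    (hx : MapClusterPt x l u) (h : ∀ n, Commute c (u n)) : Commute c x :=
  (isClosed_eq (continuous_const_mul c) (continuous_mul_const c)).mem_of_mapClusterPt hx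
    (.of_forall h)

theorem Filter.Tendsto.mul_eq_of_mapClusterPt {ι : Type*} {l : Filter ι} {u v : ι → S}
    {x y c : S} (hu : Tendsto u l (𝓝 x)) (hv : MapClusterPt y l v) (huv : ∀ n, u n * v n = c) :
    x * y = c :=
  (isClosed_singleton.preimage continuous_mul).mem_of_mapClusterPt (hu.mapClusterPt_prodMk hv)
    (.of_forall huv)

namespace IsGroupInverse

variable {a b : S} [CountablyCompactSpace S]

theorem eq_of_mapClusterPt_spow (h : IsGroupInverse a b) {f : S} (hf : IsIdempotentElem f)
    [(𝓝 f).IsCountablyGenerated] (hfa : MapClusterPt f atTop (spow a)) : f = a * b := by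
  obtain ⟨φ, -, hφ⟩ := subseq_tendsto_of_neBot hfa
  obtain ⟨g, hg⟩ := exists_mapClusterPt_of_countablyCompactSpace (spow b ∘ φ)
  have hfg : f * g = a * b := hφ.mul_eq_of_mapClusterPt hg fun n => h.spow_mul_spow (φ n)
  have hfe : f * (a * b) = f :=
    (isClosed_eq (continuous_mul_const _) continuous_id).mem_of_mapClusterPt hfa
      (.of_forall h.spow_mul)
  calc f = f * (a * b) := hfe.symm
    _ = f * f * g := by rw [← hfg, mul_assoc]
    _ = a * b := by rw [hf.eq, hfg]

theorem exists_isIdempotentElem_mapClusterPt_spow (h : IsGroupInverse a b)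
    (hinv : ∀ x : S, ∃ y, IsGroupInverse x y)
    (hnhds : ∀ e : S, IsIdempotentElem e → (𝓝 e).IsCountablyGenerated) :
    ∃ f, IsIdempotentElem f ∧ MapClusterPt f atTop (spow a) := by
  obtain ⟨x, hx⟩ := exists_mapClusterPt_of_countablyCompactSpace (spow a)
  obtain ⟨x', hxx'⟩ := hinv x
  have := hnhds _ hxx'.symm.isIdempotentElem_mul
  obtain ⟨φ, hφ, hφx⟩ :=
    subseq_tendsto_of_neBot (hx.continuousAt_comp (continuous_const_mul x').continuousAt)
  have hxφ : Tendsto (fun n => x * x' * spow a (φ n)) atTop (𝓝 x) := by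
    simpa only [Function.comp_apply, mul_assoc, ← mul_assoc x x' x, hxx'.mul_inv_mul] using
      hφx.const_mul x
  obtain ⟨y, hy⟩ := exists_mapClusterPt_of_countablyCompactSpace (spow b ∘ φ)
  have hxy : x * y = x * x' * (a * b) :=
    hxφ.mul_eq_of_mapClusterPt hy fun n => by
      rw [Function.comp_apply, mul_assoc, h.spow_mul_spow]
  have hex : Commute (a * b) x := hx.commute h.commute_spow
  refine ⟨x * y, hxy ▸ hxx'.isIdempotentElem_mul.mul_of_commute
    (hex.mul_right (hxx'.commute_right hex)).symm h.isIdempotentElem_mul, ?_⟩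
  exact isClosed_setOfPred_clusterPt.mem_of_mapClusterPt
    (hy.continuousAt_comp (continuous_const_mul x).continuousAt)
    ((eventually_gt_atTop 0).mono fun n hn => h.mapClusterPt_mul_spow hx
      (hn.trans_le (hφ.id_le n)).ne')

theorem mul_mapClusterPt_spow (h : IsGroupInverse a b)
    (hinv : ∀ x : S, ∃ y, IsGroupInverse x y)
    (hnhds : ∀ e : S, IsIdempotentElem e → (𝓝 e).IsCountablyGenerated) :
    MapClusterPt (a * b) atTop (spow a) := by
  obtain ⟨f, hf, hfa⟩ := h.exists_isIdempotentElem_mapClusterPt_spow hinv hnhds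
  have := hnhds f hf
  exact h.eq_of_mapClusterPt_spow hf hfa ▸ hfa

end IsGroupInverse

end TopologicalSemigroup

/-- Every Hausdorff regular countably compact Clifford topological semigroup `S` whose set
of idempotents is a metrizable `G_δ`-set is topologically periodic: every neighborhood of
any `a ∈ S` contains `a ^ n` for some `n ≥ 2`. -/
theorem clifford_topologically_periodic {S : Type*} [TopologicalSpace S] [Semigroup S]
    [ContinuousMul S] [T2Space S] [RegularSpace S]
    (hcc : CountablyCompact S)
    (hClifford : ∀ x : S, ∃ y : S, x * y * x = x ∧ y * x * y = y ∧ x * y = y * x)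
    (hGδ : IsGδ {e : S | e * e = e})
    (hmetr : TopologicalSpace.MetrizableSpace {e : S | e * e = e}) :
    ∀ a : S, ∀ O : Set S, IsOpen O → a ∈ O → ∃ n : ℕ, 2 ≤ n ∧ spow a n ∈ O := by
  have := hcc.countablyCompactSpace
  have hinv (x : S) : ∃ y, IsGroupInverse x y :=
    (hClifford x).imp fun _ h => ⟨h.1, h.2.1, h.2.2⟩
  have hnhds (e : S) (he : IsIdempotentElem e) : (𝓝 e).IsCountablyGenerated :=
    isCountablyGenerated_nhds_of_isGδ_singleton (hGδ.isGδ_singleton_of_mem he)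
  intro a O hO ha
  obtain ⟨b, hab⟩ := hinv a
  exact hab.exists_spow_mem (hab.mul_mapClusterPt_spow hinv hnhds) (hO.mem_nhds ha)
end

section
/- Let S be a topological semigroup and a ∈ S. Then the set A of cluster points of the sequence (a^n)_{n≥1} is a closed subsemigroup of S, and it is commutative (elements of A commute with each other and with all powers of a). -/
/-! Every cluster point of `n ↦ a ^ (n + 1)` lies in the closure of the set of powers of `a`.
Those powers commute, and centralizers are closed in a Hausdorff space with continuous
multiplication, so this closure is commutative. Right multiplication by `a ^ (m + 1)` only shifts
the sequence, so it maps cluster points to cluster points; by continuity of `x * ·` and closedness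
of the set of cluster points, `x * y` is a cluster point whenever `x` and `y` are. -/

open Filter Set

section Semigroup

variable {S : Type*} [Semigroup S] (a : S)

lemma spow_succ_mul_spow_succ (m n : ℕ) :
    spow a (m + 1) * spow a (n + 1) = spow a (m + n + 2) := by
  induction n with
  | zero => rfl
  | succ n ih =>
    change spow a (m + 1) * (spow a (n + 1) * a) = spow a (m + n + 2) * a
    rw [← mul_assoc, ih]

lemma commute_spow_succ (m n : ℕ) : Commute (spow a (m + 1)) (spow a (n + 1)) := by
  rw [Commute, SemiconjBy, spow_succ_mul_spow_succ, spow_succ_mul_spow_succ, Nat.add_comm m]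

end Semigroup

lemma MapClusterPt.mem_closure_range {X α : Type*} [TopologicalSpace X] {F : Filter α}
    {u : α → X} {x : X} (h : MapClusterPt x F u) : x ∈ closure (range u) :=
  isClosed_closure.mem_of_mapClusterPt h
    (Eventually.of_forall fun n => subset_closure (mem_range_self n))

lemma mapClusterPt_comp_add_atTop_iff {X : Type*} [TopologicalSpace X] {u : ℕ → X} {x : X}
    (k : ℕ) : MapClusterPt x atTop (u ∘ (· + k)) ↔ MapClusterPt x atTop u := by
  rw [mapClusterPt_comp, map_add_atTop_eq_nat]

lemma Set.closure_subset_centralizer_closure {M : Type*} [Mul M] [TopologicalSpace M]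
    [SeparatelyContinuousMul M] [T2Space M] {s : Set M} (hs : s ⊆ s.centralizer) :
    closure s ⊆ (closure s).centralizer := by
  have hclosure : closure s ⊆ s.centralizer := closure_minimal hs (isClosed_centralizer s)
  have hs' : s ⊆ (closure s).centralizer := fun x hx y hy => (hclosure hy x hx).symm
  exact closure_minimal hs' (isClosed_centralizer _)

lemma MapClusterPt.mul_spow_succ {S : Type*} [TopologicalSpace S] [Semigroup S]
    [SeparatelyContinuousMul S] {a x : S}
    (hx : MapClusterPt x atTop fun n => spow a (n + 1)) (m : ℕ) :
    MapClusterPt (x * spow a (m + 1)) atTop fun n => spow a (n + 1) := by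
  have h := hx.continuousAt_comp (continuous_mul_const (spow a (m + 1))).continuousAt
  rw [← mapClusterPt_comp_add_atTop_iff (m + 1)]
  convert h using 1
  funext n
  exact (spow_succ_mul_spow_succ a n m).symm

/-- In a Hausdorff topological semigroup, the set `A` of cluster points of the sequence
`(a ^ n)_{n ≥ 1}` is a closed commutative subsemigroup whose elements commute with all
powers of `a`. -/
theorem cluster_points_of_powers {S : Type*} [TopologicalSpace S] [Semigroup S]
    [ContinuousMul S] [T2Space S] (a : S) :
    IsClosed {x : S | MapClusterPt x atTop (fun n : ℕ => spow a (n + 1))} ∧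
    (∀ x ∈ {x : S | MapClusterPt x atTop (fun n : ℕ => spow a (n + 1))},
     ∀ y ∈ {x : S | MapClusterPt x atTop (fun n : ℕ => spow a (n + 1))},
        x * y ∈ {x : S | MapClusterPt x atTop (fun n : ℕ => spow a (n + 1))} ∧
        x * y = y * x) ∧
    (∀ x ∈ {x : S | MapClusterPt x atTop (fun n : ℕ => spow a (n + 1))},
      ∀ n : ℕ, 1 ≤ n → x * spow a n = spow a n * x) := by
  set u : ℕ → S := fun n => spow a (n + 1)
  have hclosed : IsClosed {x : S | MapClusterPt x atTop u} := isClosed_setOfPred_clusterPt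
  have hcomm : closure (range u) ⊆ (closure (range u)).centralizer := by
    refine closure_subset_centralizer_closure ?_
    rintro _ ⟨m, rfl⟩ _ ⟨n, rfl⟩
    exact commute_spow_succ a n m
  refine ⟨hclosed, fun x hx y hy => ⟨?_, ?_⟩, fun x hx n hn => ?_⟩
  · refine hclosed.closure_subset (map_mem_closure (continuous_const_mul x)
      hy.mem_closure_range ?_)
    rintro _ ⟨n, rfl⟩
    exact hx.mul_spow_succ n
  · exact (hcomm hx.mem_closure_range y hy.mem_closure_range).symm
  · obtain ⟨m, rfl⟩ := Nat.exists_eq_add_of_le' hn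
    exact (hcomm hx.mem_closure_range _ (subset_closure (mem_range_self m))).symm
end

section
/- Let G be a metrizable topological group with identity e, and let b ∈ G be such that the sequence (b^n)_{n≥1} has a cluster point c ∈ G. Then there exists an increasing sequence of natural numbers (n_k) with n_{k+1} − n_k → ∞ such that b^{n_k} → c, and consequently b^{n_{k+1}−n_k} → e; in particular e is a cluster point of (b^n)_{n≥1}. -/
open Filter Topology

/-!
Pass to a subsequence `b ^ ψ k → c` and thin it out to `n k = ψ (k ^ 2)`, so that the gaps
`n (k + 1) - n k ≥ 2k + 1` tend to infinity. Then `b ^ (n (k + 1) - n k) = b ^ n (k + 1) * (b ^ n k)⁻¹`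
tends to `c * c⁻¹ = 1`, and since the exponents tend to infinity, `1` is a cluster point of the powers.
-/

theorem mapClusterPt_atTop_add_nat_iff {X : Type*} [TopologicalSpace X] {u : ℕ → X} {x : X}
    (m : ℕ) : MapClusterPt x atTop (fun n => u (n + m)) ↔ MapClusterPt x atTop u := by
  unfold MapClusterPt
  conv_rhs => rw [← map_add_atTop_eq_nat m, map_map]
  rfl

theorem exists_strictMono_tendsto_sub_atTop_of_mapClusterPt {X : Type*} [TopologicalSpace X]
    [FirstCountableTopology X] {u : ℕ → X} {c : X} (hc : MapClusterPt c atTop u) :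
    ∃ φ : ℕ → ℕ, StrictMono φ ∧ Tendsto (fun k => φ (k + 1) - φ k) atTop atTop ∧
      Tendsto (u ∘ φ) atTop (𝓝 c) := by
  obtain ⟨ψ, hψ, hψc⟩ := hc.tendsto_subseq
  have hsq : StrictMono fun k : ℕ => k ^ 2 := fun _ _ h => Nat.pow_lt_pow_left h two_ne_zero
  refine ⟨ψ ∘ (· ^ 2), hψ.comp hsq, tendsto_atTop_mono (fun k => ?_) tendsto_id,
    hψc.comp hsq.tendsto_atTop⟩
  have hgap := hψ.add_le_nat (2 * k + 1) (k ^ 2)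
  rw [show 2 * k + 1 + k ^ 2 = (k + 1) ^ 2 by ring] at hgap
  simp only [Function.comp_apply, id]
  omega

theorem tendsto_pow_sub_of_tendsto_pow {G : Type*} [Group G] [TopologicalSpace G]
    [IsTopologicalGroup G] {b c : G} {n : ℕ → ℕ} (hn : Monotone n)
    (hc : Tendsto (fun k => b ^ n k) atTop (𝓝 c)) :
    Tendsto (fun k => b ^ (n (k + 1) - n k)) atTop (𝓝 1) := by
  have hlim := (hc.comp (tendsto_add_atTop_nat 1)).mul hc.inv
  rw [mul_inv_cancel] at hlim
  exact hlim.congr fun k => (pow_sub b (hn k.le_succ)).symm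

/-- In a metrizable topological group `G`, if `c` is a cluster point of `(b ^ n)_{n ≥ 1}`,
then there is an increasing sequence `(n_k)` with `n_{k+1} - n_k → ∞`, `b ^ n_k → c` and
`b ^ (n_{k+1} - n_k) → 1`; in particular `1` is a cluster point of `(b ^ n)_{n ≥ 1}`. -/
theorem cluster_point_powers_group {G : Type*} [Group G] [TopologicalSpace G]
    [IsTopologicalGroup G] [TopologicalSpace.MetrizableSpace G]
    (b c : G) (hc : MapClusterPt c atTop (fun n : ℕ => b ^ (n + 1))) :
    (∃ n : ℕ → ℕ, StrictMono n ∧ (∀ k, 1 ≤ n k) ∧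
      Tendsto (fun k => (n (k + 1) - n k : ℕ)) atTop atTop ∧
      Tendsto (fun k => b ^ (n k)) atTop (nhds c) ∧
      Tendsto (fun k => b ^ (n (k + 1) - n k)) atTop (nhds (1 : G))) ∧
    MapClusterPt (1 : G) atTop (fun n : ℕ => b ^ (n + 1)) := by
  obtain ⟨φ, hφ, hgap, hφc⟩ := exists_strictMono_tendsto_sub_atTop_of_mapClusterPt hc
  have hgap' : Tendsto (fun k => φ (k + 1) + 1 - (φ k + 1)) atTop atTop := by
    simpa only [Nat.add_sub_add_right] using hgap
  have hone := tendsto_pow_sub_of_tendsto_pow (n := (φ · + 1)) (fun _ _ h => by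
    simpa using hφ.monotone h) hφc
  refine ⟨⟨(φ · + 1), fun _ _ h => by simpa using hφ h, fun _ => Nat.le_add_left 1 _,
    hgap', hφc, hone⟩, ?_⟩
  exact (mapClusterPt_atTop_add_nat_iff (u := (b ^ ·)) 1).2 (hone.mapClusterPt.of_comp hgap')
end

section
/- Let S be a Hausdorff topological semigroup with an element a, and suppose inversion in the sense of Clifford semigroups is defined on S (every element lies in a subgroup). If some increasing sequence (m_k) satisfies a^{m_k} → e and a^{-m_k} → e for an idempotent e, then e = a*a⁻¹ and a^{m_k+1} → a; in particular a is topologically periodic. -/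
open Filter

/-- In a Hausdorff Clifford topological semigroup, if `a ^ m_k → e` and `a ^ (-m_k) → e`
for an idempotent `e` along an increasing sequence `(m_k)` of positive integers, then
`e = a * a⁻¹` and `a ^ (m_k + 1) → a`; in particular `a` is topologically periodic. -/
theorem periodicity_from_power_limits {S : Type*} [TopologicalSpace S] [Semigroup S]
    [ContinuousMul S] [T2Space S] (inv : S → S)
    (h1 : ∀ x : S, x * inv x * x = x)
    (h2 : ∀ x : S, inv x * x * inv x = inv x)
    (h3 : ∀ x : S, x * inv x = inv x * x)
    (a e : S) (he : e * e = e) (m : ℕ → ℕ) (hmono : StrictMono m) (hm1 : ∀ k, 1 ≤ m k)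
    (hlim : Tendsto (fun k => spow a (m k)) atTop (nhds e))
    (hlim' : Tendsto (fun k => inv (spow a (m k))) atTop (nhds e)) :
    e = a * inv a ∧
    Tendsto (fun k => spow a (m k + 1)) atTop (nhds a) ∧
    (∀ O : Set S, IsOpen O → a ∈ O → ∃ n : ℕ, 2 ≤ n ∧ spow a n ∈ O) := by
  set b := inv a with hb
  have hab : a * b = b * a := h3 a
  have haba : a * b * a = a := h1 a
  have hbab : b * a * b = b := h2 a
  -- commuting with all spow powers
  have comm : ∀ (x y : S), x * y = y * x → ∀ n, x * spow y n = spow y n * x := by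
    intro x y hxy n
    induction n with
    | zero => exact hxy
    | succ n ih =>
      cases n with
      | zero => exact hxy
      | succ t =>
        show x * (spow y (t + 1) * y) = (spow y (t + 1) * y) * x
        rw [← mul_assoc, ih, mul_assoc, hxy, ← mul_assoc]
  -- spow a n * spow b n = a * b
  have key : ∀ n, spow a n * spow b n = a * b := by
    intro n
    induction n with
    | zero => rfl
    | succ n ih =>
      cases n with
      | zero => rfl
      | succ t =>
        show (spow a (t + 1) * a) * (spow b (t + 1) * b) = a * b
        have hc : a * spow b (t + 1) = spow b (t + 1) * a := comm a b hab (t + 1)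
        calc (spow a (t + 1) * a) * (spow b (t + 1) * b)
            = spow a (t + 1) * (a * spow b (t + 1)) * b := by
              simp only [mul_assoc]
          _ = spow a (t + 1) * (spow b (t + 1) * a) * b := by rw [hc]
          _ = (spow a (t + 1) * spow b (t + 1)) * (a * b) := by
              simp only [mul_assoc]
          _ = (a * b) * (a * b) := by rw [ih]
          _ = a * b := by rw [← mul_assoc, haba]
  have key2 : ∀ n, spow b n * spow a n = a * b := by
    intro n
    have hc : spow b n * a = a * spow b n := (comm a b hab n).symm
    have hcc : spow b n * spow a n = spow a n * spow b n := comm (spow b n) a hc n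
    rw [hcc, key]
  -- (a*b) absorbs on powers of a and of b
  have pmula : ∀ n, (a * b) * spow a n = spow a n := by
    intro n
    induction n with
    | zero => exact haba
    | succ n ih =>
      cases n with
      | zero => exact haba
      | succ t =>
        show (a * b) * (spow a (t + 1) * a) = spow a (t + 1) * a
        rw [← mul_assoc, ih]
  have pmulb : ∀ n, (a * b) * spow b n = spow b n := by
    intro n
    induction n with
    | zero => rw [hab]; exact hbab
    | succ n ih =>
      cases n with
      | zero => rw [hab]; exact hbab
      | succ t =>
        show (a * b) * (spow b (t + 1) * b) = spow b (t + 1) * b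
        rw [← mul_assoc, ih]
  -- uniqueness of commuting inverses : inv (spow a n) = spow b n
  have invspow : ∀ n, inv (spow a n) = spow b n := by
    intro n
    set X := spow a n
    set Y := inv X with hY
    set Z := spow b n
    have hY1 : X * Y * X = X := h1 X
    have hY2 : Y * X * Y = Y := h2 X
    have hY3 : X * Y = Y * X := h3 X
    have hXZ : X * Z = a * b := key n
    have hZX : Z * X = a * b := key2 n
    have hZ1 : X * Z * X = X := by rw [hXZ, pmula]
    have hZ2 : Z * X * Z = Z := by rw [hZX, pmulb]
    have hZ3 : X * Z = Z * X := by rw [hXZ, hZX]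
    -- p = X*Y, q = X*Z ; show p = q then Y = Z
    have hq_pq : X * Z = (X * Y) * (X * Z) := by
      conv_lhs => rw [← hY1]
      simp only [mul_assoc]
    have hq_qp : (X * Z) * (X * Y) = X * Z := by
      rw [hZ3, hY3, mul_assoc, ← mul_assoc X Y X, hY1]
    have hp_qp : X * Y = (X * Z) * (X * Y) := by
      conv_lhs => rw [← hZ1]
      simp only [mul_assoc]
    have hpq : X * Y = X * Z := by rw [hp_qp, hq_qp]
    have hYZ : Y = Z := by
      calc Y = Y * (X * Y) := by rw [← mul_assoc, hY2]
        _ = Y * (X * Z) := by rw [hpq]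
        _ = (Y * X) * Z := by rw [mul_assoc]
        _ = (X * Y) * Z := by rw [hY3]
        _ = (X * Z) * Z := by rw [hpq]
        _ = (Z * X) * Z := by rw [hZ3]
        _ = Z := by rw [hZ2]
    exact hYZ
  -- the constant sequence a*b tends to e*e = e
  have hmul : Tendsto (fun k => spow a (m k) * inv (spow a (m k))) atTop (nhds (e * e)) :=
    hlim.mul hlim'
  have hconst : (fun k => spow a (m k) * inv (spow a (m k))) = fun _ => a * b := by
    funext k
    rw [invspow (m k), key (m k)]
  rw [hconst, he] at hmul
  have he_eq : e = a * b := tendsto_nhds_unique tendsto_const_nhds hmul |>.symm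
  have hea : e * a = a := by rw [he_eq, haba]
  have spow_succ : ∀ n, 1 ≤ n → spow a (n + 1) = spow a n * a := by
    intro n hn
    obtain ⟨t, rfl⟩ : ∃ t, n = t + 1 := ⟨n - 1, by omega⟩
    rfl
  have hlim2 : Tendsto (fun k => spow a (m k + 1)) atTop (nhds a) := by
    have h : (fun k => spow a (m k + 1)) = fun k => spow a (m k) * a := by
      funext k; exact spow_succ (m k) (hm1 k)
    rw [h]
    have hca : Tendsto (fun _ : ℕ => a) atTop (nhds a) := tendsto_const_nhds
    have := hlim.mul hca
    rwa [hea] at this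
  refine ⟨he_eq, hlim2, ?_⟩
  intro O hO haO
  obtain ⟨k, hk⟩ := (hlim2.eventually_mem (hO.mem_nhds haO)).exists
  exact ⟨m k + 1, by have := hm1 k; omega, hk⟩
end
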